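/- arXiv:1309.5980 — 2 statements merged into one kernel-verified Lean document; each statement's English description precedes it below -/
import Mathlib

section
/- Let (ν, Δ, ν) = A(X_k, R_k; f) be the Schützenberger automaton of an idempotent f ∈ U relative to the presentation ⟨X_k | R_k⟩ of S_k, for some k ∈ {1,2}, and let I(ν, Δ) = {y ∈ V(Δ) : (ν, u, y) is a path in Δ for some u ∈ U}. Then the maximal subgroup H_f^U of f in U is isomorphic to the group {φ ∈ Aut(Δ) : φ(I(ν, Δ)) ⊆ I(ν, Δ)}. -/
/-! ## Inverse semigroups, Green's relations, amalgams -/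

/-- An inverse semigroup: each element has a unique (generalized) inverse. -/
class InverseSemigroup (S : Type) extends Semigroup S, Inv S where
  mul_inv_mul : ∀ a : S, a * a⁻¹ * a = a
  inv_mul_inv : ∀ a : S, a⁻¹ * a * a⁻¹ = a⁻¹
  inv_unique : ∀ {a b : S}, a * b * a = a → b * a * b = b → b = a⁻¹

/-- Idempotent element. -/
def IsIdem {S : Type} [Mul S] (e : S) : Prop := e * e = e

/-- Principal right ideal `a ∪ aS`. -/
def rIdeal {S : Type} [Semigroup S] (a : S) : Set S := insert a {x | ∃ s, x = a * s}
/-- Principal left ideal `a ∪ Sa`. -/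
def lIdeal {S : Type} [Semigroup S] (a : S) : Set S := insert a {x | ∃ s, x = s * a}

/-- Green's relation `R`. -/
def GreenR {S : Type} [Semigroup S] (a b : S) : Prop := rIdeal a = rIdeal b
/-- Green's relation `L`. -/
def GreenL {S : Type} [Semigroup S] (a b : S) : Prop := lIdeal a = lIdeal b
/-- Green's relation `H`. -/
def GreenH {S : Type} [Semigroup S] (a b : S) : Prop := GreenR a b ∧ GreenL a b
/-- Green's relation `D`. -/
def GreenD {S : Type} [Semigroup S] (a b : S) : Prop := ∃ c, GreenR a c ∧ GreenL c b

/-- The `H`-class of an element; for an idempotent `e` this is the maximal subgroup at `e`. -/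
def Hclass {S : Type} [Semigroup S] (e : S) : Set S := {x | GreenH x e}

/-- Semigroup homomorphism (as a property of a plain function). -/
def IsSemigroupHom {S T : Type} [Mul S] [Mul T] (f : S → T) : Prop :=
  ∀ a b, f (a * b) = f a * f b

/-- `A ⊆ S` and `B ⊆ T` are isomorphic as (partial) multiplicative structures:
there is a bijection of `A` onto `B` under which multiplication (staying inside `A`,
resp. `B`) is preserved.  For `H`-classes of idempotents this is group isomorphism. -/
def SubMulIso {S T : Type} [Mul S] [Mul T] (A : Set S) (B : Set T) : Prop :=
  ∃ φ : S → T, Set.BijOn φ A B ∧ ∀ a ∈ A, ∀ b ∈ A, a * b ∈ A ∧ φ (a * b) = φ a * φ b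

/-- `A ⊆ S` is isomorphic (as a group inside `S`) to the group `G`. -/
def SetGroupIso {S : Type} [Mul S] (A : Set S) (G : Type) [Group G] : Prop :=
  ∃ φ : S → G, Set.BijOn φ A Set.univ ∧ ∀ a ∈ A, ∀ b ∈ A, a * b ∈ A ∧ φ (a * b) = φ a * φ b

/-- An amalgam `[S₁, S₂; U]`: a common inverse subsemigroup `U` embedded
in `S₁` and in `S₂`. -/
structure AmalgamData (U S1 S2 : Type) [InverseSemigroup U] [InverseSemigroup S1]
    [InverseSemigroup S2] : Type where
  φ1 : U → S1
  φ2 : U → S2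
  hom1 : IsSemigroupHom φ1
  hom2 : IsSemigroupHom φ2
  inj1 : Function.Injective φ1
  inj2 : Function.Injective φ2

/-- `S`, with the maps `ι1 : S1 → S`, `ι2 : S2 → S`, is the free product of the amalgam
`[S₁, S₂; U]` in the category of inverse semigroups (universal property). -/
structure IsAmalgFreeProd (U S1 S2 S : Type) [InverseSemigroup U] [InverseSemigroup S1]
    [InverseSemigroup S2] [InverseSemigroup S] (AD : AmalgamData U S1 S2)
    (ι1 : S1 → S) (ι2 : S2 → S) : Prop where
  hom1 : IsSemigroupHom ι1
  hom2 : IsSemigroupHom ι2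
  comm : ∀ u, ι1 (AD.φ1 u) = ι2 (AD.φ2 u)
  generates : ∀ s : S, s ∈ Subsemigroup.closure (Set.range ι1 ∪ Set.range ι2)
  universal : ∀ (T : Type) [InverseSemigroup T] (f1 : S1 → T) (f2 : S2 → T),
    IsSemigroupHom f1 → IsSemigroupHom f2 → (∀ u, f1 (AD.φ1 u) = f2 (AD.φ2 u)) →
    ∃ h : S → T, IsSemigroupHom h ∧ (∀ x, h (ι1 x) = f1 x) ∧ (∀ x, h (ι2 x) = f2 x)

/-- `g : X → T` is a presentation-style generating map: `T` is generated, as a semigroup,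
by the images of the letters and their inverses. -/
def GeneratesInv {T X : Type} [InverseSemigroup T] (g : X → T) : Prop :=
  ∀ t : T, t ∈ Subsemigroup.closure (Set.range g ∪ Set.range fun x => (g x)⁻¹)

/-! ## Labeled graphs (inverse word graphs) -/

/-- A digraph with edges labeled over `A` (edge relation only; the vertex set is the support). -/
structure LGraph (V A : Type) : Type where
  E : V → A → V → Prop

namespace LGraph

/-- The vertices actually occurring in the graph. -/
def supp {V A : Type} (G : LGraph V A) : Set V :=
  {v | (∃ a w, G.E v a w) ∨ (∃ a w, G.E w a v)}

/-- Paths spelling a given word. -/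
inductive Path {V A : Type} (G : LGraph V A) : V → List A → V → Prop
  | nil (v : V) : Path G v [] v
  | cons {v w x : V} {a : A} {l : List A} : G.E v a w → Path G w l x → Path G v (a :: l) x

end LGraph

def IsSubgraphOf {V A : Type} (H G : LGraph V A) : Prop := ∀ v a w, H.E v a w → G.E v a w

def IsDeterministic {V A : Type} (G : LGraph V A) : Prop :=
  ∀ v a w w', G.E v a w → G.E v a w' → w = w'

/-- One undirected step. -/
def GStep {V A : Type} (G : LGraph V A) (v w : V) : Prop := ∃ a, G.E v a w ∨ G.E w a v

/-- Connectivity of the support. -/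
def GConn {V A : Type} (G : LGraph V A) : Prop :=
  ∀ v ∈ G.supp, ∀ w ∈ G.supp, Relation.ReflTransGen (GStep G) v w

/-- All edges colored `i` (colors of letters given by `c`). -/
def MonoColor {V A : Type} (c : A → Bool) (G : LGraph V A) (i : Bool) : Prop :=
  ∀ v a w, G.E v a w → c a = i

/-- A lobe: a maximal monochromatic connected (nonempty) subgraph. -/
def IsLobe {V A : Type} (c : A → Bool) (G L : LGraph V A) : Prop :=
  IsSubgraphOf L G ∧ L.supp.Nonempty ∧ GConn L ∧ (∃ i, MonoColor c L i) ∧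
  ∀ L', IsSubgraphOf L' G → GConn L' → (∃ i, MonoColor c L' i) → IsSubgraphOf L L' →
    IsSubgraphOf L' L

/-- Adjacent lobes: distinct lobes sharing a vertex. -/
def LobeAdj {V A : Type} (c : A → Bool) (G : LGraph V A) (L L' : LGraph V A) : Prop :=
  IsLobe c G L ∧ IsLobe c G L' ∧ L ≠ L' ∧ (L.supp ∩ L'.supp).Nonempty

theorem LobeAdj.symm {V A : Type} {c : A → Bool} {G L L' : LGraph V A}
    (h : LobeAdj c G L L') : LobeAdj c G L' L := by
  obtain ⟨h1, h2, h3, x, hx1, hx2⟩ := h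
  exact ⟨h2, h1, fun e => h3 e.symm, ⟨x, hx2, hx1⟩⟩

/-- A path in the lobe graph. -/
def IsLobePath {V A : Type} (c : A → Bool) (G : LGraph V A) (l : List (LGraph V A)) : Prop :=
  l ≠ [] ∧ (∀ L ∈ l, IsLobe c G L) ∧ l.Chain' (LobeAdj c G)

/-- A reduced path in the lobe graph (no backtracking). -/
def IsReducedLobePath {V A : Type} (c : A → Bool) (G : LGraph V A)
    (l : List (LGraph V A)) : Prop :=
  IsLobePath c G l ∧ ∀ (i : ℕ) (h : i + 2 < l.length),
    l.get ⟨i, by omega⟩ ≠ l.get ⟨i + 2, h⟩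

/-- The lobe graph is a tree: connected and without nontrivial reduced closed paths. -/
def LobeTreeProp {V A : Type} (c : A → Bool) (G : LGraph V A) : Prop :=
  (∀ L L', IsLobe c G L → IsLobe c G L' →
    ∃ l, IsReducedLobePath c G l ∧ l.head? = some L ∧ l.getLast? = some L') ∧
  (∀ l, IsReducedLobePath c G l → l.head? = l.getLast? → l.length ≤ 1)

/-- Intersection vertex: a vertex common to two distinct lobes. -/
def IsIntersectionVertex {V A : Type} (c : A → Bool) (G : LGraph V A) (ν : V) : Prop :=
  ∃ L L', IsLobe c G L ∧ IsLobe c G L' ∧ L ≠ L' ∧ ν ∈ L.supp ∩ L'.supp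

/-- `φ` is a (label preserving) isomorphism of `G` onto `H`. -/
def IsIsoOn {V V' A : Type} (φ : V → V') (G : LGraph V A) (H : LGraph V' A) : Prop :=
  Set.BijOn φ G.supp H.supp ∧ (∀ v a w, G.E v a w → H.E (φ v) a (φ w)) ∧
  (∀ v a w, v ∈ G.supp → w ∈ G.supp → H.E (φ v) a (φ w) → G.E v a w)

/-- `G` and `H` are isomorphic inverse word graphs. -/
def GIso {V V' A : Type} (G : LGraph V A) (H : LGraph V' A) : Prop := ∃ φ, IsIsoOn φ G H

/-- Image of a graph under a vertex map. -/
def mapGraph {V V' A : Type} (φ : V → V') (G : LGraph V A) : LGraph V' A :=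
  ⟨fun v a w => ∃ v' w', G.E v' a w' ∧ φ v' = v ∧ φ w' = w⟩

/-- The automorphisms of `G`, realized as the permutations of `V` that fix everything
outside the support of `G` and preserve the labeled edges.  This set is a subgroup of
`Equiv.Perm V` and is isomorphic to the automorphism group of `G`. -/
def AutSet {V A : Type} (G : LGraph V A) : Set (Equiv.Perm V) :=
  {φ | Set.BijOn φ G.supp G.supp ∧ (∀ v a w, G.E v a w ↔ G.E (φ v) a (φ w)) ∧
    ∀ v, v ∉ G.supp → φ v = v}

/-- Union of two graphs. -/
def unionGraph {V A : Type} (G H : LGraph V A) : LGraph V A :=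
  ⟨fun v a w => G.E v a w ∨ H.E v a w⟩
/-! ## Word evaluation and Schützenberger graphs -/

/-- Value of a word in a semigroup, given a partial evaluation of letters
(`none` on letters of the wrong color); the empty word has no value. -/
def wordValO {A W : Type} [Mul W] (f : A → Option W) : List A → Option W
  | [] => none
  | a :: l =>
    match f a, wordValO f l with
    | none, _ => none
    | some x, none => if l.isEmpty then some x else none
    | some x, some y => some (x * y)

/-- There is a path from `v` to `w` labeled by a (nonempty) word with value `s`. -/
def UPathS {V A W : Type} [Mul W] (f : A → Option W) (G : LGraph V A)
    (v : V) (s : W) (w : V) : Prop :=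
  ∃ l, G.Path v l w ∧ wordValO f l = some s

/-- `G` is closed w.r.t. the presentation whose letters evaluate by `f`:
words with equal value label paths between the same pairs of vertices. -/
def ClosedRel {V A W : Type} [Mul W] (f : A → Option W) (G : LGraph V A) : Prop :=
  ∀ (u v : List A) (s : W), wordValO f u = some s → wordValO f v = some s →
    ∀ p q, G.Path p u q → G.Path p v q

/-- The Schützenberger graph of `w`: vertices form the `R`-class of `w`, with an edge
`s --a--> t` whenever `s · (value of a) = t` inside this `R`-class. -/
def schutzGraph {W A : Type} [Semigroup W] (f : A → Option W) (w : W) : LGraph W A :=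
  ⟨fun s a t => GreenR s w ∧ GreenR t w ∧ ∃ x, f a = some x ∧ s * x = t⟩

/-- `H` is a deterministic V-quotient (DV-quotient) of `G`. -/
def IsDVQuotientOf {V V' A : Type} (H : LGraph V A) (G : LGraph V' A) : Prop :=
  ∃ q : V' → V, Set.SurjOn q G.supp H.supp ∧ Set.MapsTo q G.supp H.supp ∧
    (∀ v a w, G.E v a w → H.E (q v) a (q w)) ∧
    (∀ v a w, H.E v a w → ∃ v' w', G.E v' a w' ∧ q v' = v ∧ q w' = w) ∧
    IsDeterministic H

/-- `s` is the minimum idempotent labelling a loop based at `ν` in `L`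
(w.r.t. the natural partial order `s ≤ t ↔ s = s * t` on idempotents). -/
def MinIdemLoopAt {V A W : Type} [Semigroup W] (fW : A → Option W) (L : LGraph V A)
    (ν : V) (s : W) : Prop :=
  UPathS fW L ν s ν ∧ IsIdem s ∧ ∀ t, UPathS fW L ν t ν → IsIdem t → s * t = s

/-! ## The amalgam alphabet `X = X₁ ∪ X₂` (with formal inverses) -/

/-- Color of a letter: `false` = color 1, `true` = color 2. -/
def colorOf {X1 X2 : Type} : (X1 ⊕ X2) × Bool → Bool
  | (Sum.inl _, _) => false
  | (Sum.inr _, _) => true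

/-- Formal inverse of a letter. -/
def barLetter {X1 X2 : Type} (a : (X1 ⊕ X2) × Bool) : (X1 ⊕ X2) × Bool := (a.1, !a.2)

/-- Evaluation of letters of color 1 in `S1` (letters of color 2 have no value). -/
def letterS1 {X1 X2 S1 : Type} [InverseSemigroup S1] (g1 : X1 → S1) :
    (X1 ⊕ X2) × Bool → Option S1
  | (Sum.inl x, b) => some (if b then (g1 x)⁻¹ else g1 x)
  | (Sum.inr _, _) => none

/-- Evaluation of letters of color 2 in `S2`. -/
def letterS2 {X1 X2 S2 : Type} [InverseSemigroup S2] (g2 : X2 → S2) :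
    (X1 ⊕ X2) × Bool → Option S2
  | (Sum.inl _, _) => none
  | (Sum.inr x, b) => some (if b then (g2 x)⁻¹ else g2 x)

/-- Evaluation of all letters in the amalgamated free product `S`
(via `h1 = ι1 ∘ g1` and `h2 = ι2 ∘ g2`). -/
def letterAmalg {X1 X2 S : Type} [InverseSemigroup S] (h1 : X1 → S) (h2 : X2 → S) :
    (X1 ⊕ X2) × Bool → Option S
  | (Sum.inl x, b) => some (if b then (h1 x)⁻¹ else h1 x)
  | (Sum.inr x, b) => some (if b then (h2 x)⁻¹ else h2 x)

/-- The Schützenberger graph `SΓ(X, R ∪ W; w)` of `w` relative to the standard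
presentation of the amalgamated free product. -/
def SGam {X1 X2 S1 S2 S : Type} [InverseSemigroup S1] [InverseSemigroup S2]
    [InverseSemigroup S] (g1 : X1 → S1) (g2 : X2 → S2) (ι1 : S1 → S) (ι2 : S2 → S)
    (w : S) : LGraph S ((X1 ⊕ X2) × Bool) :=
  schutzGraph (letterAmalg (fun x => ι1 (g1 x)) (fun x => ι2 (g2 x))) w
/-! ## Opuntoid graphs -/

section Opuntoid

variable {U S1 S2 X1 X2 V : Type}
variable [InverseSemigroup U] [InverseSemigroup S1] [InverseSemigroup S2]

/-- There is a path from `ν` to `ν'` in the (monochromatic) graph `L` labeled by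
(a word representing) the element `u` of `U`. -/
def UPathLbl (AD : AmalgamData U S1 S2) (g1 : X1 → S1) (g2 : X2 → S2)
    (L : LGraph V ((X1 ⊕ X2) × Bool)) (ν : V) (u : U) (ν' : V) : Prop :=
  (MonoColor colorOf L false ∧ UPathS (letterS1 g1) L ν (AD.φ1 u) ν') ∨
  (MonoColor colorOf L true ∧ UPathS (letterS2 g2) L ν (AD.φ2 u) ν')

/-- `L_U(ν, L)`: the set of elements of `U` labelling a loop of `L` based at `ν`. -/
def LUset (AD : AmalgamData U S1 S2) (g1 : X1 → S1) (g2 : X2 → S2)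
    (L : LGraph V ((X1 ⊕ X2) × Bool)) (ν : V) : Set U :=
  {u | UPathLbl AD g1 g2 L ν u ν}

/-- `f = f(e_i(ν))` is the minimum idempotent of `U` in `L_U(ν, L)`. -/
def MinUIdemLoopAt (AD : AmalgamData U S1 S2) (g1 : X1 → S1) (g2 : X2 → S2)
    (L : LGraph V ((X1 ⊕ X2) × Bool)) (ν : V) (f : U) : Prop :=
  f ∈ LUset AD g1 g2 L ν ∧ IsIdem f ∧
    ∀ u ∈ LUset AD g1 g2 L ν, IsIdem u → f * u = f

/-- An admissible lobe: a finite closed DV-quotient of a Schützenberger graph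
relative to `⟨X_i | R_i⟩` for some `i ∈ {1,2}`. -/
def GoodLobe (g1 : X1 → S1) (g2 : X2 → S2) (L : LGraph V ((X1 ⊕ X2) × Bool)) : Prop :=
  L.supp.Finite ∧
  ((MonoColor colorOf L false ∧ ClosedRel (letterS1 g1) L ∧
      ∃ w : S1, IsDVQuotientOf L (schutzGraph (letterS1 g1) w)) ∨
   (MonoColor colorOf L true ∧ ClosedRel (letterS2 g2) L ∧
      ∃ w : S2, IsDVQuotientOf L (schutzGraph (letterS2 g2) w)))

/-- Opuntoid graph over `X = X₁ ∪ X₂`. -/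
structure IsOpuntoid (AD : AmalgamData U S1 S2) (g1 : X1 → S1) (g2 : X2 → S2)
    (G : LGraph V ((X1 ⊕ X2) × Bool)) : Prop where
  /-- inverse word graph: closed under formal inversion of edges -/
  inv_closed : ∀ v a w, G.E v a w → G.E w (barLetter a) v
  /-- deterministic -/
  det : IsDeterministic G
  /-- the lobe graph is a tree -/
  tree : LobeTreeProp colorOf G
  /-- each lobe is a finite closed DV-quotient of a Schützenberger graph -/
  lobes_good : ∀ L, IsLobe colorOf G L → GoodLobe g1 g2 L
  /-- loop equality property -/
  loop_eq : ∀ L L', IsLobe colorOf G L → IsLobe colorOf G L' → L ≠ L' →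
    ∀ ν ∈ L.supp ∩ L'.supp, LUset AD g1 g2 L ν = LUset AD g1 g2 L' ν
  /-- assimilation property -/
  assim : ∀ L L', IsLobe colorOf G L → IsLobe colorOf G L' → L ≠ L' →
    ∀ ν ∈ L.supp ∩ L'.supp, ∀ ν' ∈ L.supp ∩ L'.supp, ν' ≠ ν →
      (∃ u : U, UPathLbl AD g1 g2 L ν u ν' ∧ UPathLbl AD g1 g2 L' ν u ν') ∧
      (∀ u : U, UPathLbl AD g1 g2 L ν u ν' ↔ UPathLbl AD g1 g2 L' ν u ν')

/-- A bud of `G`: a non-intersection vertex `ν` of a lobe `Δ` with `L_U(ν,Δ) ≠ ∅`. -/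
def IsBudOf (AD : AmalgamData U S1 S2) (g1 : X1 → S1) (g2 : X2 → S2)
    (G : LGraph V ((X1 ⊕ X2) × Bool)) (ν : V) : Prop :=
  ¬ IsIntersectionVertex colorOf G ν ∧
  ∃ L, IsLobe colorOf G L ∧ ν ∈ L.supp ∧ (LUset AD g1 g2 L ν).Nonempty

/-- A complete opuntoid graph: no buds. -/
def IsCompleteOp (AD : AmalgamData U S1 S2) (g1 : X1 → S1) (g2 : X2 → S2)
    (G : LGraph V ((X1 ⊕ X2) × Bool)) : Prop :=
  ∀ ν : V, ¬ IsBudOf AD g1 g2 G ν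

/-- A subopuntoid subgraph: a subgraph whose lobes are lobes of `Γ`. -/
def IsSubopuntoid (Γ Θ : LGraph V ((X1 ⊕ X2) × Bool)) : Prop :=
  IsSubgraphOf Θ Γ ∧ ∀ L, IsLobe colorOf Θ L → IsLobe colorOf Γ L

end Opuntoid

/-! ## Construction 5 and the feeding-off relation -/

/-- Least equivalence relation containing `R` whose quotient graph is deterministic. -/
inductive DetCl {V A : Type} (G : LGraph V A) (R : V → V → Prop) : V → V → Prop
  | base {a b : V} : R a b → DetCl G R a b
  | refl (a : V) : DetCl G R a a
  | symm {a b : V} : DetCl G R a b → DetCl G R b a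
  | trans {a b c : V} : DetCl G R a b → DetCl G R b c → DetCl G R a c
  | det {p q p' q' : V} {x : A} : DetCl G R p q → G.E p x p' → G.E q x q' → DetCl G R p' q'

/-- Quotient of a graph by (the `Quot` of) a relation on vertices. -/
def quotGraph {V A : Type} (G : LGraph V A) (r : V → V → Prop) : LGraph (Quot r) A :=
  ⟨fun p a q => ∃ v w, G.E v a w ∧ Quot.mk r v = p ∧ Quot.mk r w = q⟩

/-- `Δ'` is the lobe produced by Construction 5 at a bud/vertex `ν` with minimum
`U`-idempotent `f`: it is (isomorphic to, with `ν` corresponding to the base point)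
the quotient of the Schützenberger graph `Λ` of `f` in the other factor by the least
deterministic equivalence identifying the net
`N = {y | (base, u, y) is a path of Λ for some u ∈ L_U}` with the base point. -/
def Built5 {V W U A : Type} [Semigroup W] (fW : A → Option W) (φW : U → W)
    (LUs : Set U) (f : U) (ν : V) (Δ' : LGraph V A) : Prop :=
  let Λ := schutzGraph fW (φW f)
  let R : W → W → Prop := fun p q =>
    (p = φW f ∨ ∃ u ∈ LUs, UPathS fW Λ (φW f) (φW u) p) ∧
    (q = φW f ∨ ∃ u ∈ LUs, UPathS fW Λ (φW f) (φW u) q)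
  ∃ ψ : Quot (DetCl Λ R) → V,
    IsIsoOn ψ (quotGraph Λ (DetCl Λ R)) Δ' ∧ ψ (Quot.mk (DetCl Λ R) (φW f)) = ν

section Feeds

variable {U S1 S2 X1 X2 V : Type}
variable [InverseSemigroup U] [InverseSemigroup S1] [InverseSemigroup S2]

/-- `Δ ↦ Δ'`: the lobe `Δ'` directly feeds off `Δ` (in the opuntoid graph `Γ`):
they are adjacent and `Δ'` arises from `Δ` by Construction 5 at a common vertex. -/
def DFO (AD : AmalgamData U S1 S2) (g1 : X1 → S1) (g2 : X2 → S2)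
    (Γ Δ Δ' : LGraph V ((X1 ⊕ X2) × Bool)) : Prop :=
  LobeAdj colorOf Γ Δ Δ' ∧ ∃ ν ∈ Δ.supp ∩ Δ'.supp, ∃ f : U,
    MinUIdemLoopAt AD g1 g2 Δ ν f ∧
    ((MonoColor colorOf Δ false ∧
        Built5 (letterS2 g2) AD.φ2 (LUset AD g1 g2 Δ ν) f ν Δ') ∨
     (MonoColor colorOf Δ true ∧
        Built5 (letterS1 g1) AD.φ1 (LUset AD g1 g2 Δ ν) f ν Δ'))

/-- `Δ ↦* Δ'`: transitive closure of direct feeding off. -/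
def FeedsOff (AD : AmalgamData U S1 S2) (g1 : X1 → S1) (g2 : X2 → S2)
    (Γ : LGraph V ((X1 ⊕ X2) × Bool)) :
    LGraph V ((X1 ⊕ X2) × Bool) → LGraph V ((X1 ⊕ X2) × Bool) → Prop :=
  Relation.TransGen (DFO AD g1 g2 Γ)

/-- A parasite: a lobe adjacent to precisely one other lobe, off which it feeds. -/
def IsParasite (AD : AmalgamData U S1 S2) (g1 : X1 → S1) (g2 : X2 → S2)
    (Γ Δ' : LGraph V ((X1 ⊕ X2) × Bool)) : Prop :=
  IsLobe colorOf Γ Δ' ∧ ∃ Δ, LobeAdj colorOf Γ Δ' Δ ∧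
    (∀ Δ'', LobeAdj colorOf Γ Δ' Δ'' → Δ'' = Δ) ∧ FeedsOff AD g1 g2 Γ Δ Δ'

/-- A host of `Γ`: a parasite-free subopuntoid subgraph with finitely many lobes such
that every lobe of `Γ` not belonging to it feeds off one of its lobes. -/
def IsHost (AD : AmalgamData U S1 S2) (g1 : X1 → S1) (g2 : X2 → S2)
    (Γ H : LGraph V ((X1 ⊕ X2) × Bool)) : Prop :=
  IsSubopuntoid Γ H ∧ {L | IsLobe colorOf H L}.Finite ∧
  (∀ Δ', ¬ IsParasite AD g1 g2 H Δ') ∧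
  (∀ L, IsLobe colorOf Γ L → ¬ IsLobe colorOf H L →
    ∃ L', IsLobe colorOf H L' ∧ FeedsOff AD g1 g2 Γ L' L)

/-- `Host(Γ)`: the union of all hosts of `Γ`. -/
def HostUnion (AD : AmalgamData U S1 S2) (g1 : X1 → S1) (g2 : X2 → S2)
    (Γ : LGraph V ((X1 ⊕ X2) × Bool)) : LGraph V ((X1 ⊕ X2) × Bool) :=
  ⟨fun v a w => ∃ H, IsHost AD g1 g2 Γ H ∧ H.E v a w⟩

end Feeds

/-- A shift-isomorphism between two lobes `Δ`, `Δ'` of `G`: an isomorphism `ψ` of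
`Δ` onto `Δ'` such that, along the reduced lobe path `Δ = Δ₀, Δ₁, …, Δₙ = Δ'`,
the image of an intersection vertex `ν₁ ∈ V(Δ₀) ∩ V(Δ₁)` does not lie in
`V(Δ_{n-1}) ∩ V(Δₙ)`. -/
def IsShiftIso {V X1 X2 : Type} (G : LGraph V ((X1 ⊕ X2) × Bool)) (ψ : V → V)
    (Δ Δ' : LGraph V ((X1 ⊕ X2) × Bool)) : Prop :=
  IsIsoOn ψ Δ Δ' ∧ ∃ l, IsReducedLobePath colorOf G l ∧
    l.head? = some Δ ∧ l.getLast? = some Δ' ∧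
    ∃ h : 2 ≤ l.length,
      ∃ ν1 ∈ (l.get ⟨0, by omega⟩).supp ∩ (l.get ⟨1, by omega⟩).supp,
        ψ ν1 ∉ (l.get ⟨l.length - 2, by omega⟩).supp ∩ (l.get ⟨l.length - 1, by omega⟩).supp
/-! ## Graphs with involution, trees, graphs of groups, fundamental groups -/

section SymGraph

variable {VY EY : Type}

/-- An edge path from `v` to `w` in a graph given by `ini` (initial vertex)
and `bar` (opposite edge); the terminal vertex of `e` is `ini (bar e)`. -/
def EdgePath (ini : EY → VY) (bar : EY → EY) (v w : VY) (l : List EY) : Prop :=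
  l.Chain' (fun e f => ini (bar e) = ini f) ∧ (l = [] → v = w) ∧
  ∀ h : l ≠ [], ini (l.head h) = v ∧ ini (bar (l.getLast h)) = w

/-- A reduced edge path: no backtracking. -/
def ReducedEP (bar : EY → EY) (l : List EY) : Prop := l.Chain' (fun e f => f ≠ bar e)

/-- The graph `(VY, EY, ini, bar)` is a tree. -/
def IsTreeSG (ini : EY → VY) (bar : EY → EY) : Prop :=
  (∀ v w : VY, ∃ l, EdgePath ini bar v w l) ∧
  (∀ (v : VY) (l : List EY), EdgePath ini bar v v l → ReducedEP bar l → l = [])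

/-- `T` is (the edge set of) a maximal (spanning) subtree. -/
def IsSpanningTreeSG (ini : EY → VY) (bar : EY → EY) (T : Set EY) : Prop :=
  (∀ y ∈ T, bar y ∈ T) ∧
  (∀ v w : VY, ∃ l, EdgePath ini bar v w l ∧ ∀ e ∈ l, e ∈ T) ∧
  (∀ (v : VY) (l : List EY), EdgePath ini bar v v l → ReducedEP bar l →
    (∀ e ∈ l, e ∈ T) → l = [])

end SymGraph

/-- The data of a graph of groups arising from an action: the vertex and edge groups are
given as subsets (stabilizers) of an ambient group `P`; `σ_y` is the inclusion
`Se y ⊆ Sv (ini y)` and `τ_y` is the inclusion followed by conjugation by `conj y`. -/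
structure BSData (P VY EY : Type) [Group P] (ini : EY → VY) (bar : EY → EY) : Type where
  Sv : VY → Set P
  Se : EY → Set P
  conj : EY → P
  se_sub : ∀ y, Se y ⊆ Sv (ini y)
  se_bar : ∀ y, Se (bar y) = Se y
  conj_mem : ∀ y, ∀ a ∈ Se y, conj y * a * (conj y)⁻¹ ∈ Sv (ini (bar y))

/-- The defining relations of the fundamental group of a graph of groups with respect to
a maximal subtree `T`: the multiplication tables of the vertex groups, the relations
`y⁻¹ σ_y(a) y = τ_y(a)`, the relations `ȳ = y⁻¹`, and `y = 1` for `y ∈ T`. -/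
def bsRels {P VY EY : Type} [Group P] {ini : EY → VY} {bar : EY → EY}
    (D : BSData P VY EY ini bar) (T : Set EY) :
    Set (FreeGroup ((Σ v : VY, {x : P // x ∈ D.Sv v}) ⊕ EY)) :=
  {r | (∃ (v : VY) (a b c : {x : P // x ∈ D.Sv v}), (a : P) * (b : P) = (c : P) ∧
          r = FreeGroup.of (Sum.inl ⟨v, a⟩) * FreeGroup.of (Sum.inl ⟨v, b⟩) *
              (FreeGroup.of (Sum.inl ⟨v, c⟩))⁻¹) ∨
       (∃ (y : EY) (a : {x : P // x ∈ D.Se y}) (b : {x : P // x ∈ D.Sv (ini y)})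
          (c : {x : P // x ∈ D.Sv (ini (bar y))}),
          (b : P) = (a : P) ∧ (c : P) = D.conj y * (a : P) * (D.conj y)⁻¹ ∧
          r = (FreeGroup.of (Sum.inr y))⁻¹ * FreeGroup.of (Sum.inl ⟨ini y, b⟩) *
              FreeGroup.of (Sum.inr y) * (FreeGroup.of (Sum.inl ⟨ini (bar y), c⟩))⁻¹) ∨
       (∃ y : EY, r = FreeGroup.of (Sum.inr (bar y)) * FreeGroup.of (Sum.inr y)) ∨
       (∃ y ∈ T, r = FreeGroup.of (Sum.inr y))}

/-- The fundamental group `π(𝒢(-), Y)` of the graph of groups, as a presented group. -/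
abbrev piBS {P VY EY : Type} [Group P] {ini : EY → VY} {bar : EY → EY}
    (D : BSData P VY EY ini bar) (T : Set EY) : Type :=
  PresentedGroup (bsRels D T)

/-! ## The lobe tree `T_e`, the action of the automorphism group, the quotient `Y` -/

section LobeAction

variable {V A : Type}

/-- Vertices of the lobe tree: the lobes of `HU`. -/
def LobeVert (c : A → Bool) (HU : LGraph V A) : Type :=
  {L : LGraph V A // IsLobe c HU L}

/-- Edges of the lobe tree: ordered pairs of adjacent lobes. -/
def LobeEdge (c : A → Bool) (HU : LGraph V A) : Type :=
  {p : LobeVert c HU × LobeVert c HU // LobeAdj c HU p.1.val p.2.val}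

/-- Orbit equivalence on lobes under a set `Gs` of permutations (automorphisms). -/
def lobeOrbitRel (Gs : Set (Equiv.Perm V)) (c : A → Bool) (HU : LGraph V A) :
    LobeVert c HU → LobeVert c HU → Prop :=
  fun L L' => ∃ φ ∈ Gs, mapGraph (⇑φ) L.val = L'.val

/-- Orbit equivalence on edges of the lobe tree. -/
def edgeOrbitRel (Gs : Set (Equiv.Perm V)) (c : A → Bool) (HU : LGraph V A) :
    LobeEdge c HU → LobeEdge c HU → Prop :=
  fun p q => ∃ φ ∈ Gs, mapGraph (⇑φ) p.val.1.val = q.val.1.val ∧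
    mapGraph (⇑φ) p.val.2.val = q.val.2.val

/-- Vertices of the quotient graph `Y = G \ T_e`: orbits of lobes. -/
def YV (Gs : Set (Equiv.Perm V)) (c : A → Bool) (HU : LGraph V A) : Type :=
  Quot (lobeOrbitRel Gs c HU)

/-- Edges of the quotient graph `Y`: orbits of edges of the lobe tree. -/
def YE (Gs : Set (Equiv.Perm V)) (c : A → Bool) (HU : LGraph V A) : Type :=
  Quot (edgeOrbitRel Gs c HU)

/-- Initial-vertex map of the quotient graph `Y`. -/
def Yini (Gs : Set (Equiv.Perm V)) (c : A → Bool) (HU : LGraph V A) :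
    YE Gs c HU → YV Gs c HU :=
  Quot.lift (fun p => Quot.mk _ p.val.1)
    (fun _ _ h => by
      obtain ⟨φ, hφ, h1, _⟩ := h
      exact Quot.sound ⟨φ, hφ, h1⟩)

/-- Opposite-edge map of the quotient graph `Y`. -/
def Ybar (Gs : Set (Equiv.Perm V)) (c : A → Bool) (HU : LGraph V A) :
    YE Gs c HU → YE Gs c HU :=
  Quot.lift (fun p => Quot.mk _ (⟨(p.val.2, p.val.1), p.property.symm⟩ : LobeEdge c HU))
    (fun _ _ h => by
      obtain ⟨φ, hφ, h1, h2⟩ := h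
      exact Quot.sound ⟨φ, hφ, h2, h1⟩)

/-- The graph of groups `(𝒢(-), Y)`, with maximal subtree `T`, is obtained by the
standard Bass–Serre construction from the action of (the group generated by) `Gs` on
the lobe tree of `HU`: vertex and edge groups are stabilizers of lifts, the lifts over
the maximal subtree `T` form a subtree, `σ` is inclusion and `τ` is inclusion
conjugated by elements carrying terminal vertices of lifts to the chosen lifts. -/
def ConstructedFromAction (Gs : Set (Equiv.Perm V)) (c : A → Bool) (HU : LGraph V A)
    (D : BSData (Equiv.Perm V) (YV Gs c HU) (YE Gs c HU) (Yini Gs c HU) (Ybar Gs c HU))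
    (T : Set (YE Gs c HU)) : Prop :=
  IsSpanningTreeSG (Yini Gs c HU) (Ybar Gs c HU) T ∧
  ∃ (jV : YV Gs c HU → LobeVert c HU) (jE : YE Gs c HU → LobeEdge c HU),
    (∀ v, Quot.mk (lobeOrbitRel Gs c HU) (jV v) = v) ∧
    (∀ y, Quot.mk (edgeOrbitRel Gs c HU) (jE y) = y) ∧
    (∀ v, D.Sv v = {φ | φ ∈ Gs ∧ mapGraph (⇑φ) (jV v).val = (jV v).val}) ∧
    (∀ y, D.Se y = {φ | φ ∈ Gs ∧ mapGraph (⇑φ) (jE y).val.1.val = (jE y).val.1.val ∧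
        mapGraph (⇑φ) (jE y).val.2.val = (jE y).val.2.val}) ∧
    (∀ y, (jE y).val.1 = jV (Yini Gs c HU y)) ∧
    (∀ y, D.conj y ∈ Gs ∧
        mapGraph (⇑(D.conj y)) (jE y).val.2.val = (jV (Yini Gs c HU (Ybar Gs c HU y))).val) ∧
    (∀ y ∈ T, D.conj y = 1 ∧ (jE y).val.2 = jV (Yini Gs c HU (Ybar Gs c HU y)))

end LobeAction
/-! ## STATEMENT 13
Let `(ν, Δ, ν) = A(X_k, R_k; f)` be the Schützenberger automaton of an idempotent
`f ∈ U` relative to `⟨X_k | R_k⟩`, and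
`I(ν,Δ) = {y ∈ V(Δ) : (ν, u, y) is a path of Δ for some u ∈ U}`.
Then `H_f^U ≅ {φ ∈ Aut(Δ) : φ(I(ν,Δ)) ⊆ I(ν,Δ)}`.  (Both cases `k = 1, 2`.) -/

/-! ### Auxiliary: basic inverse semigroup facts -/

section AuxInvSemi
variable {S : Type} [InverseSemigroup S]

lemma aux_inv_inv (a : S) : a⁻¹⁻¹ = a :=
  (InverseSemigroup.inv_unique (InverseSemigroup.inv_mul_inv a)
    (InverseSemigroup.mul_inv_mul a)).symm

lemma aux_idem_inv {e : S} (he : IsIdem e) : e⁻¹ = e := by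
  have h : e * e * e = e := by
    have he' : e * e = e := he
    rw [he', he']
  exact (InverseSemigroup.inv_unique h h).symm

lemma IsIdem.mulmul {e : S} (he : IsIdem e) (t : S) : e * (e * t) = e * t := by
  rw [← mul_assoc]
  exact congrArg (fun z => z * t) he

lemma aux_idem_mul_inv (a : S) : IsIdem (a * a⁻¹) := by
  show a * a⁻¹ * (a * a⁻¹) = a * a⁻¹
  rw [← mul_assoc, InverseSemigroup.mul_inv_mul]

lemma aux_idem_inv_mul (a : S) : IsIdem (a⁻¹ * a) := by
  show a⁻¹ * a * (a⁻¹ * a) = a⁻¹ * a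
  rw [← mul_assoc, InverseSemigroup.inv_mul_inv]

lemma aux_mul_idem {e f : S} (he : IsIdem e) (hf : IsIdem f) : IsIdem (e * f) := by
  have h1 : (e * f) * (e * f)⁻¹ * (e * f) = e * f := InverseSemigroup.mul_inv_mul _
  have h2 : (e * f)⁻¹ * (e * f) * (e * f)⁻¹ = (e * f)⁻¹ := InverseSemigroup.inv_mul_inv _
  have c1 : (e * f) * (f * (e * f)⁻¹ * e) * (e * f) = e * f := by
    simp only [mul_assoc] at h1 ⊢
    simp only [he.mulmul, hf.mulmul]
    exact h1
  have c2 : (f * (e * f)⁻¹ * e) * (e * f) * (f * (e * f)⁻¹ * e) = f * (e * f)⁻¹ * e := by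
    calc (f * (e * f)⁻¹ * e) * (e * f) * (f * (e * f)⁻¹ * e)
        = f * ((e * f)⁻¹ * (e * f) * (e * f)⁻¹) * e := by
          simp only [mul_assoc, he.mulmul, hf.mulmul]
      _ = f * (e * f)⁻¹ * e := by rw [h2, mul_assoc]
  have hfxe : f * (e * f)⁻¹ * e = (e * f)⁻¹ := InverseSemigroup.inv_unique c1 c2
  have hxx : IsIdem ((e * f)⁻¹) := by
    show (e * f)⁻¹ * (e * f)⁻¹ = (e * f)⁻¹
    calc (e * f)⁻¹ * (e * f)⁻¹ = (f * (e * f)⁻¹ * e) * (f * (e * f)⁻¹ * e) := by rw [hfxe]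
      _ = f * ((e * f)⁻¹ * (e * f) * (e * f)⁻¹) * e := by simp only [mul_assoc]
      _ = f * (e * f)⁻¹ * e := by rw [h2, mul_assoc]
      _ = (e * f)⁻¹ := hfxe
  have : e * f = (e * f)⁻¹ := by
    calc e * f = (e * f)⁻¹⁻¹ := (aux_inv_inv (e * f)).symm
      _ = (e * f)⁻¹ := aux_idem_inv hxx
  rw [this]; exact hxx

lemma aux_idem_comm {e f : S} (he : IsIdem e) (hf : IsIdem f) : e * f = f * e := by
  have hef := aux_mul_idem he hf
  have hfe := aux_mul_idem hf he
  have c1 : (e * f) * (f * e) * (e * f) = e * f := by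
    calc (e * f) * (f * e) * (e * f) = (e * f) * (e * f) := by
          simp only [mul_assoc, he.mulmul, hf.mulmul]
      _ = e * f := hef
  have c2 : (f * e) * (e * f) * (f * e) = f * e := by
    calc (f * e) * (e * f) * (f * e) = (f * e) * (f * e) := by
          simp only [mul_assoc, he.mulmul, hf.mulmul]
      _ = f * e := hfe
  calc e * f = (e * f)⁻¹ := (aux_idem_inv hef).symm
    _ = f * e := (InverseSemigroup.inv_unique c1 c2).symm

lemma aux_mul_inv_rev (a b : S) : (a * b)⁻¹ = b⁻¹ * a⁻¹ := by
  have c1 : (a * b) * (b⁻¹ * a⁻¹) * (a * b) = a * b := by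
    calc (a * b) * (b⁻¹ * a⁻¹) * (a * b) = a * ((b * b⁻¹) * (a⁻¹ * a)) * b := by
          simp only [mul_assoc]
      _ = a * ((a⁻¹ * a) * (b * b⁻¹)) * b := by
          rw [aux_idem_comm (aux_idem_mul_inv b) (aux_idem_inv_mul a)]
      _ = (a * a⁻¹ * a) * (b * b⁻¹ * b) := by simp only [mul_assoc]
      _ = a * b := by rw [InverseSemigroup.mul_inv_mul, InverseSemigroup.mul_inv_mul]
  have c2 : (b⁻¹ * a⁻¹) * (a * b) * (b⁻¹ * a⁻¹) = b⁻¹ * a⁻¹ := by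
    calc (b⁻¹ * a⁻¹) * (a * b) * (b⁻¹ * a⁻¹) = b⁻¹ * ((a⁻¹ * a) * (b * b⁻¹)) * a⁻¹ := by
          simp only [mul_assoc]
      _ = b⁻¹ * ((b * b⁻¹) * (a⁻¹ * a)) * a⁻¹ := by
          rw [aux_idem_comm (aux_idem_inv_mul a) (aux_idem_mul_inv b)]
      _ = (b⁻¹ * b * b⁻¹) * (a⁻¹ * a * a⁻¹) := by simp only [mul_assoc]
      _ = b⁻¹ * a⁻¹ := by rw [InverseSemigroup.inv_mul_inv, InverseSemigroup.inv_mul_inv]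
  exact (InverseSemigroup.inv_unique c1 c2).symm

end AuxInvSemi

lemma aux_hom_inv {S T : Type} [InverseSemigroup S] [InverseSemigroup T] {ψ : S → T}
    (hψ : IsSemigroupHom ψ) (a : S) : ψ a⁻¹ = (ψ a)⁻¹ := by
  apply InverseSemigroup.inv_unique
  · rw [← hψ, ← hψ, InverseSemigroup.mul_inv_mul]
  · rw [← hψ, ← hψ, InverseSemigroup.inv_mul_inv]
/-! ### Auxiliary: Green's relations in inverse semigroups -/

section AuxGreen
variable {S : Type} [InverseSemigroup S]

lemma aux_mem_rIdeal {a x : S} : x ∈ rIdeal a ↔ ∃ s, x = a * s := by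
  constructor
  · rintro (rfl | hx)
    · exact ⟨x⁻¹ * x, by rw [← mul_assoc, InverseSemigroup.mul_inv_mul]⟩
    · exact hx
  · intro hx; exact Set.mem_insert_of_mem _ hx

lemma aux_mem_lIdeal {a x : S} : x ∈ lIdeal a ↔ ∃ s, x = s * a := by
  constructor
  · rintro (rfl | hx)
    · exact ⟨x * x⁻¹, (InverseSemigroup.mul_inv_mul x).symm⟩
    · exact hx
  · intro hx; exact Set.mem_insert_of_mem _ hx

lemma aux_rIdeal_mul_sub (a b : S) : rIdeal (a * b) ⊆ rIdeal a := by
  intro x hx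
  rw [aux_mem_rIdeal] at hx ⊢
  obtain ⟨s, rfl⟩ := hx
  exact ⟨b * s, by rw [mul_assoc]⟩

lemma aux_rIdeal_self_inv (a : S) : rIdeal a = rIdeal (a * a⁻¹) := by
  apply Set.Subset.antisymm
  · intro x hx; rw [aux_mem_rIdeal] at hx ⊢
    obtain ⟨s, rfl⟩ := hx
    exact ⟨a * s, by rw [← mul_assoc, InverseSemigroup.mul_inv_mul]⟩
  · intro x hx; rw [aux_mem_rIdeal] at hx ⊢
    obtain ⟨s, rfl⟩ := hx
    exact ⟨a⁻¹ * s, by rw [mul_assoc]⟩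

lemma aux_lIdeal_self_inv (a : S) : lIdeal a = lIdeal (a⁻¹ * a) := by
  apply Set.Subset.antisymm
  · intro x hx; rw [aux_mem_lIdeal] at hx ⊢
    obtain ⟨s, rfl⟩ := hx
    exact ⟨s * a, by rw [mul_assoc, ← mul_assoc a, InverseSemigroup.mul_inv_mul]⟩
  · intro x hx; rw [aux_mem_lIdeal] at hx ⊢
    obtain ⟨s, rfl⟩ := hx
    exact ⟨s * a⁻¹, by rw [mul_assoc]⟩

lemma aux_greenR_iff (a b : S) : GreenR a b ↔ a * a⁻¹ = b * b⁻¹ := by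
  constructor
  · intro h
    replace h : rIdeal a = rIdeal b := h
    have ha : a ∈ rIdeal b := by
      rw [← h, aux_mem_rIdeal]
      exact ⟨a⁻¹ * a, by rw [← mul_assoc, InverseSemigroup.mul_inv_mul]⟩
    have hb : b ∈ rIdeal a := by
      rw [h, aux_mem_rIdeal]
      exact ⟨b⁻¹ * b, by rw [← mul_assoc, InverseSemigroup.mul_inv_mul]⟩
    rw [aux_mem_rIdeal] at ha hb
    obtain ⟨s, hs⟩ := ha
    obtain ⟨t, ht⟩ := hb
    have hba : b * b⁻¹ * a = a := by rw [hs, ← mul_assoc, InverseSemigroup.mul_inv_mul]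
    have hab : a * a⁻¹ * b = b := by rw [ht, ← mul_assoc, InverseSemigroup.mul_inv_mul]
    have h1 : b * b⁻¹ * (a * a⁻¹) = a * a⁻¹ := by rw [← mul_assoc, hba]
    have h2 : a * a⁻¹ * (b * b⁻¹) = b * b⁻¹ := by rw [← mul_assoc, hab]
    calc a * a⁻¹ = b * b⁻¹ * (a * a⁻¹) := h1.symm
      _ = a * a⁻¹ * (b * b⁻¹) := aux_idem_comm (aux_idem_mul_inv b) (aux_idem_mul_inv a)
      _ = b * b⁻¹ := h2
  · intro h
    show rIdeal a = rIdeal b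
    rw [aux_rIdeal_self_inv a, aux_rIdeal_self_inv b, h]

lemma aux_greenL_iff (a b : S) : GreenL a b ↔ a⁻¹ * a = b⁻¹ * b := by
  constructor
  · intro h
    replace h : lIdeal a = lIdeal b := h
    have ha : a ∈ lIdeal b := by
      rw [← h, aux_mem_lIdeal]
      exact ⟨a * a⁻¹, (InverseSemigroup.mul_inv_mul a).symm⟩
    have hb : b ∈ lIdeal a := by
      rw [h, aux_mem_lIdeal]
      exact ⟨b * b⁻¹, (InverseSemigroup.mul_inv_mul b).symm⟩
    rw [aux_mem_lIdeal] at ha hb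
    obtain ⟨s, hs⟩ := ha
    obtain ⟨t, ht⟩ := hb
    have hba : a * (b⁻¹ * b) = a := by
      rw [hs, mul_assoc, ← mul_assoc b, InverseSemigroup.mul_inv_mul]
    have hab : b * (a⁻¹ * a) = b := by
      rw [ht, mul_assoc, ← mul_assoc a, InverseSemigroup.mul_inv_mul]
    have h1 : a⁻¹ * a * (b⁻¹ * b) = a⁻¹ * a := by rw [mul_assoc, hba]
    have h2 : b⁻¹ * b * (a⁻¹ * a) = b⁻¹ * b := by rw [mul_assoc, hab]
    calc a⁻¹ * a = a⁻¹ * a * (b⁻¹ * b) := h1.symm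
      _ = b⁻¹ * b * (a⁻¹ * a) := aux_idem_comm (aux_idem_inv_mul a) (aux_idem_inv_mul b)
      _ = b⁻¹ * b := h2
  · intro h
    show lIdeal a = lIdeal b
    rw [aux_lIdeal_self_inv a, aux_lIdeal_self_inv b, h]

lemma aux_mem_Hclass_iff {f : S} (hf : IsIdem f) (u : S) :
    u ∈ Hclass f ↔ u * u⁻¹ = f ∧ u⁻¹ * u = f := by
  have h1 : f * f⁻¹ = f := by rw [aux_idem_inv hf]; exact hf
  have h2 : f⁻¹ * f = f := by rw [aux_idem_inv hf]; exact hf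
  constructor
  · rintro ⟨hR, hL⟩
    exact ⟨((aux_greenR_iff u f).mp hR).trans h1, ((aux_greenL_iff u f).mp hL).trans h2⟩
  · rintro ⟨hR, hL⟩
    exact ⟨(aux_greenR_iff u f).mpr (hR.trans h1.symm), (aux_greenL_iff u f).mpr (hL.trans h2.symm)⟩

end AuxGreen
/-! ### Auxiliary: words, paths, Schützenberger graphs -/

section AuxWords
variable {A W : Type} [Mul W] {f : A → Option W}

lemma aux_wordValO_ne_nil {l : List A} {s : W} (h : wordValO f l = some s) : l ≠ [] := by
  intro hl; subst hl; simp [wordValO] at h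

lemma aux_wordValO_cons_none {a : A} (l : List A) (hfa : f a = none) :
    wordValO f (a :: l) = none := by
  unfold wordValO; rw [hfa]

lemma aux_wordValO_cons_some_none {a : A} {l : List A} {x : W} (hfa : f a = some x)
    (hl : wordValO f l = none) :
    wordValO f (a :: l) = if l.isEmpty then some x else none := by
  unfold wordValO; rw [hfa, hl]

lemma aux_wordValO_cons_some_some {a : A} {l : List A} {x t : W} (hfa : f a = some x)
    (hl : wordValO f l = some t) : wordValO f (a :: l) = some (x * t) := by
  unfold wordValO; rw [hfa, hl]

lemma aux_wordValO_cons_elim {a : A} {l : List A} {s : W} (h : wordValO f (a :: l) = some s) :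
    ∃ x, f a = some x ∧ ((l = [] ∧ s = x) ∨ ∃ t, wordValO f l = some t ∧ s = x * t) := by
  cases hfa : f a with
  | none => rw [aux_wordValO_cons_none l hfa] at h; exact absurd h (by simp)
  | some x =>
    cases hl : wordValO f l with
    | none =>
      rw [aux_wordValO_cons_some_none hfa hl] at h
      cases l with
      | nil =>
        simp only [List.isEmpty_nil, if_true, Option.some.injEq] at h
        exact ⟨x, rfl, Or.inl ⟨rfl, h.symm⟩⟩
      | cons b l' => simp at h
    | some t =>
      rw [aux_wordValO_cons_some_some hfa hl] at h
      injection h with h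
      exact ⟨x, rfl, Or.inr ⟨t, rfl, h.symm⟩⟩

end AuxWords

lemma aux_wordValO_append {A W : Type} [Semigroup W] {f : A → Option W} :
    ∀ {l1 l2 : List A} {s t : W}, wordValO f l1 = some s → wordValO f l2 = some t →
      wordValO f (l1 ++ l2) = some (s * t) := by
  intro l1
  induction l1 with
  | nil => intro l2 s t h1 _; exact absurd rfl (aux_wordValO_ne_nil h1)
  | cons a l ih =>
    intro l2 s t h1 h2
    obtain ⟨x, hfa, hrest⟩ := aux_wordValO_cons_elim h1
    rcases hrest with ⟨rfl, rfl⟩ | ⟨t', hl, rfl⟩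
    · exact aux_wordValO_cons_some_some hfa h2
    · have h3 := aux_wordValO_cons_some_some hfa (ih hl h2)
      rw [← mul_assoc] at h3
      exact h3

section AuxPaths
variable {V A : Type} {G : LGraph V A}

lemma aux_path_cons_elim {v w : V} {a : A} {l : List A} (h : G.Path v (a :: l) w) :
    ∃ x, G.E v a x ∧ G.Path x l w := by
  cases h with
  | cons he hp => exact ⟨_, he, hp⟩

lemma aux_path_append {l2 : List A} : ∀ {l1 : List A} {v w x : V},
    G.Path v l1 w → G.Path w l2 x → G.Path v (l1 ++ l2) x := by
  intro l1
  induction l1 with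
  | nil => intro v w x h1 h2; cases h1; exact h2
  | cons a l ih =>
    intro v w x h1 h2
    obtain ⟨y, he, hp⟩ := aux_path_cons_elim h1
    exact LGraph.Path.cons he (ih hp h2)

lemma aux_path_map {V' : Type} {H : LGraph V' A} {ψ : V → V'}
    (hψ : ∀ v a w, G.E v a w → H.E (ψ v) a (ψ w)) :
    ∀ {l : List A} {v w : V}, G.Path v l w → H.Path (ψ v) l (ψ w) := by
  intro l
  induction l with
  | nil => intro v w h; cases h; exact LGraph.Path.nil _
  | cons a l ih =>
    intro v w h
    obtain ⟨y, he, hp⟩ := aux_path_cons_elim h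
    exact LGraph.Path.cons (hψ _ _ _ he) (ih hp)

end AuxPaths

lemma aux_schutz_E_iff {W A : Type} [Semigroup W] (fW : A → Option W) (w0 v : W) (a : A)
    (w : W) : (schutzGraph fW w0).E v a w ↔
      GreenR v w0 ∧ GreenR w w0 ∧ ∃ x, fW a = some x ∧ v * x = w := Iff.rfl

lemma aux_schutz_path_eval {W A : Type} [Semigroup W] {fW : A → Option W} {w0 : W} :
    ∀ {l : List A} {v x s : W}, (schutzGraph fW w0).Path v l x → wordValO fW l = some s →
      x = v * s := by
  intro l
  induction l with
  | nil => intro v x s _ h; exact absurd rfl (aux_wordValO_ne_nil h)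
  | cons a l ih =>
    intro v x s hp hval
    obtain ⟨y, he, hp'⟩ := aux_path_cons_elim hp
    obtain ⟨xa, hfa, hrest⟩ := aux_wordValO_cons_elim hval
    obtain ⟨_, _, xa', hfa', hmul⟩ := (aux_schutz_E_iff fW w0 v a y).mp he
    have hxa : xa' = xa := by rw [hfa'] at hfa; exact Option.some.inj hfa
    rcases hrest with ⟨rfl, rfl⟩ | ⟨t, hl, rfl⟩
    · cases hp'
      rw [← hmul, hxa]
    · have hx := ih hp' hl
      rw [hx, ← hmul, hxa, mul_assoc]

lemma aux_path_of_word {W A : Type} [InverseSemigroup W] {fW : A → Option W} {w0 : W} :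
    ∀ {l : List A} {v s : W}, wordValO fW l = some s → GreenR v w0 → GreenR (v * s) w0 →
      (schutzGraph fW w0).Path v l (v * s) := by
  intro l
  induction l with
  | nil => intro v s h _ _; exact absurd rfl (aux_wordValO_ne_nil h)
  | cons a l ih =>
    intro v s hval hv hvs
    obtain ⟨x, hfa, hrest⟩ := aux_wordValO_cons_elim hval
    rcases hrest with ⟨rfl, rfl⟩ | ⟨t, hl, rfl⟩
    · exact LGraph.Path.cons ((aux_schutz_E_iff fW w0 v a (v * s)).mpr ⟨hv, hvs, s, hfa, rfl⟩)
        (LGraph.Path.nil _)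
    · replace hv : rIdeal v = rIdeal w0 := hv
      replace hvs : rIdeal (v * (x * t)) = rIdeal w0 := hvs
      have hvx : GreenR (v * x) w0 := by
        show rIdeal (v * x) = rIdeal w0
        apply Set.Subset.antisymm
        · intro y hy
          rw [← hv]
          exact aux_rIdeal_mul_sub v x hy
        · intro y hy
          rw [← hvs] at hy
          have hsub : rIdeal (v * (x * t)) ⊆ rIdeal (v * x) := by
            rw [← mul_assoc]
            exact aux_rIdeal_mul_sub (v * x) t
          exact hsub hy
      have hvxt : GreenR (v * x * t) w0 := by
        show rIdeal (v * x * t) = rIdeal w0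
        rw [mul_assoc]
        exact hvs
      have hp := ih hl hvx hvxt
      have hp' : (schutzGraph fW w0).Path (v * x) l (v * (x * t)) := by
        rw [← mul_assoc]
        exact hp
      exact LGraph.Path.cons ((aux_schutz_E_iff fW w0 v a (v * x)).mpr ⟨hv, hvx, x, hfa, rfl⟩) hp'

lemma aux_path_end_greenR {W A : Type} [Semigroup W] {fW : A → Option W} {w0 : W} :
    ∀ {l : List A} {v x : W}, (schutzGraph fW w0).Path v l x → l ≠ [] → GreenR x w0 := by
  intro l
  induction l with
  | nil => intro v x _ h; exact absurd rfl h
  | cons a l ih =>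
    intro v x hp _
    obtain ⟨y, he, hp'⟩ := aux_path_cons_elim hp
    cases l with
    | nil =>
      cases hp'
      exact ((aux_schutz_E_iff fW w0 v a x).mp he).2.1
    | cons b l' => exact ih hp' (by simp)

/-! ### Auxiliary: powers in a finite semigroup -/

def spow {U : Type} [Semigroup U] (u : U) : ℕ → U
  | 0 => u
  | n + 1 => u * spow u n

lemma spow_comm {U : Type} [Semigroup U] (u : U) : ∀ n, u * spow u n = spow u n * u
  | 0 => rfl
  | n + 1 => by
    show u * (u * spow u n) = (u * spow u n) * u
    rw [mul_assoc, spow_comm u n]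

lemma spow_mul_inv_mul {U : Type} [InverseSemigroup U] (u : U) :
    ∀ n, spow u n * u⁻¹ * u = spow u n
  | 0 => InverseSemigroup.mul_inv_mul u
  | n + 1 => by
    show (u * spow u n) * u⁻¹ * u = u * spow u n
    rw [spow_comm u n]
    simp only [mul_assoc]
    rw [← mul_assoc u, InverseSemigroup.mul_inv_mul]

lemma spow_add {U : Type} [Semigroup U] (u : U) : ∀ a b : ℕ,
    spow u (a + b + 1) = spow u a * spow u b := by
  intro a b
  induction a with
  | zero => rw [show 0 + b + 1 = b + 1 by omega]; rfl
  | succ a ih =>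
    rw [show a + 1 + b + 1 = (a + b + 1) + 1 by omega]
    show u * spow u (a + b + 1) = (u * spow u a) * spow u b
    rw [ih, mul_assoc]

lemma spow_shift {U : Type} [Semigroup U] (u : U) {i p : ℕ}
    (h : spow u i = spow u (i + p)) : ∀ t, spow u (i + t) = spow u (i + p + t)
  | 0 => h
  | t + 1 => by
    have ih := spow_shift u h t
    show u * spow u (i + t) = u * spow u (i + p + t)
    rw [ih]

lemma spow_shift_mul {U : Type} [Semigroup U] (u : U) {i p : ℕ}
    (h : spow u i = spow u (i + p)) : ∀ t d : ℕ, spow u (i + t + d * p) = spow u (i + t) := by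
  intro t d
  induction d with
  | zero => simp
  | succ d ih =>
    have e1 : i + t + (d + 1) * p = i + p + (t + d * p) := by ring
    rw [e1, ← spow_shift u h (t + d * p), ← Nat.add_assoc]
    exact ih

lemma exists_spow_idem {U : Type} [Semigroup U] [Finite U] (u : U) :
    ∃ n, spow u n * spow u n = spow u n := by
  obtain ⟨i, j, hij, hej⟩ := Finite.exists_ne_map_eq_of_infinite (spow u)
  have key : ∀ i j : ℕ, i < j → spow u i = spow u j → ∃ n, spow u n * spow u n = spow u n := by
    intro i j hij hej
    set p := j - i with hp
    have hp1 : 1 ≤ p := by omega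
    have h : spow u i = spow u (i + p) := by rw [show i + p = j by omega]; exact hej
    set q := (i + 1) * p with hq
    have hq1 : 0 < q := by rw [hq]; exact Nat.mul_pos (Nat.succ_pos i) (by omega)
    set n := q - 1 with hn
    have hnq : n + 1 = q := by omega
    have hni : i ≤ n := by
      have h2 : i + 1 ≤ q := by
        rw [hq]
        calc i + 1 = (i + 1) * 1 := by ring
          _ ≤ (i + 1) * p := Nat.mul_le_mul_left _ hp1
      omega
    refine ⟨n, ?_⟩
    have hmul : spow u n * spow u n = spow u (n + n + 1) := (spow_add u n n).symm
    rw [hmul]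
    have e2 : n + n + 1 = i + (n - i) + (i + 1) * p := by
      rw [show i + (n - i) = n by omega, ← hq]
      omega
    rw [e2, spow_shift_mul u h (n - i) (i + 1), show i + (n - i) = n by omega]
  rcases Nat.lt_trichotomy i j with h | h | h
  · exact key i j h hej
  · exact absurd h hij
  · exact key j i h hej.symm
/-! ### Auxiliary: left-multiplication permutations -/

section AuxPerm
variable {S : Type} [InverseSemigroup S]

open Classical in
noncomputable def lmulFun (e c : S) (x : S) : S := if x * x⁻¹ = e then c * x else x

lemma aux_lmul_stays {e c x : S} (h1 : c * c⁻¹ = e) (h2 : c⁻¹ * c = e) (hx : x * x⁻¹ = e) :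
    (c * x) * (c * x)⁻¹ = e := by
  have he : e * e = e := by rw [← h1]; exact aux_idem_mul_inv c
  rw [aux_mul_inv_rev]
  calc c * x * (x⁻¹ * c⁻¹) = c * (x * x⁻¹) * c⁻¹ := by simp only [mul_assoc]
    _ = c * (c⁻¹ * c) * c⁻¹ := by rw [hx, ← h2]
    _ = (c * c⁻¹) * (c * c⁻¹) := by simp only [mul_assoc]
    _ = e := by rw [h1, he]

lemma aux_lmul_stays2 {e a b : S} (ha2 : a⁻¹ * a = e) (hb1 : b * b⁻¹ = e)
    (hb2 : b⁻¹ * b = e) : (a * b)⁻¹ * (a * b) = e := by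
  have he : e * e = e := by rw [← hb2]; exact aux_idem_inv_mul b
  rw [aux_mul_inv_rev]
  calc (b⁻¹ * a⁻¹) * (a * b) = b⁻¹ * (a⁻¹ * a) * b := by simp only [mul_assoc]
    _ = b⁻¹ * (b * b⁻¹) * b := by rw [ha2, ← hb1]
    _ = (b⁻¹ * b) * (b⁻¹ * b) := by simp only [mul_assoc]
    _ = e := by rw [hb2, he]

lemma aux_lmulFun_inv {e c : S} (h1 : c * c⁻¹ = e) (h2 : c⁻¹ * c = e) (x : S) :
    lmulFun e c⁻¹ (lmulFun e c x) = x := by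
  unfold lmulFun
  by_cases hx : x * x⁻¹ = e
  · rw [if_pos hx, if_pos (aux_lmul_stays h1 h2 hx), ← mul_assoc, h2, ← hx,
      InverseSemigroup.mul_inv_mul]
  · rw [if_neg hx, if_neg hx]

noncomputable def lmulPerm (e c : S) (h1 : c * c⁻¹ = e) (h2 : c⁻¹ * c = e) : Equiv.Perm S where
  toFun := lmulFun e c
  invFun := lmulFun e c⁻¹
  left_inv := aux_lmulFun_inv h1 h2
  right_inv := fun x => by
    have h1' : c⁻¹ * c⁻¹⁻¹ = e := by rw [aux_inv_inv]; exact h2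
    have h2' : c⁻¹⁻¹ * c⁻¹ = e := by rw [aux_inv_inv]; exact h1
    have hr := aux_lmulFun_inv h1' h2' x
    rwa [aux_inv_inv] at hr

lemma lmulPerm_apply (e c : S) (h1 : c * c⁻¹ = e) (h2 : c⁻¹ * c = e) (x : S) :
    lmulPerm e c h1 h2 x = lmulFun e c x := rfl

lemma lmulPerm_symm_apply (e c : S) (h1 : c * c⁻¹ = e) (h2 : c⁻¹ * c = e) (x : S) :
    (lmulPerm e c h1 h2).symm x = lmulFun e c⁻¹ x := rfl

end AuxPerm

/-! ### The main abstract isomorphism -/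

theorem aux_key_iso {U S A : Type} [InverseSemigroup U] [InverseSemigroup S] [Finite U]
    (fA : A → Option S) (φm : U → S) (hhom : IsSemigroupHom φm) (hinj : Function.Injective φm)
    (hgen : ∀ t : S, ∃ l : List A, wordValO fA l = some t)
    (f : U) (hf : IsIdem f) :
    SubMulIso (Hclass f)
      {φ : Equiv.Perm S | φ ∈ AutSet (schutzGraph fA (φm f)) ∧
        Set.MapsTo (⇑φ)
          {y : S | ∃ u : U, UPathS fA (schutzGraph fA (φm f)) (φm f) (φm u) y}
          {y : S | ∃ u : U, UPathS fA (schutzGraph fA (φm f)) (φm f) (φm u) y}} := by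
  classical
  have hinvm : ∀ u : U, φm u⁻¹ = (φm u)⁻¹ := aux_hom_inv hhom
  set e : S := φm f with he_def
  have he : e * e = e := by rw [he_def, ← hhom, hf]
  have hei : e⁻¹ = e := aux_idem_inv he
  have heRe : e * e⁻¹ = e := by rw [hei]; exact he
  have hgre : ∀ x : S, GreenR x e ↔ x * x⁻¹ = e := by
    intro x
    refine (aux_greenR_iff x e).trans ?_
    rw [heRe]
  have hEx : ∀ x : S, x * x⁻¹ = e → e * x = x := by
    intro x hx
    rw [← hx, InverseSemigroup.mul_inv_mul]
  -- the support of the Schützenberger graph is exactly the R-class of e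
  have hsupp : ∀ x : S, x ∈ (schutzGraph fA e).supp ↔ x * x⁻¹ = e := by
    intro x
    constructor
    · rintro (⟨a, w, hv, _, _⟩ | ⟨a, w, _, hw, _⟩)
      · exact (hgre x).mp hv
      · exact (hgre x).mp hw
    · intro hx
      obtain ⟨l, hl⟩ := hgen (x⁻¹ * x)
      have hx2 : x * (x⁻¹ * x) = x := by rw [← mul_assoc, InverseSemigroup.mul_inv_mul]
      have hp := aux_path_of_word hl ((hgre x).mpr hx)
        (by rw [hx2]; exact (hgre x).mpr hx)
      rw [hx2] at hp
      cases hp with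
      | nil => exact absurd rfl (aux_wordValO_ne_nil hl)
      | cons hE' _ => exact Or.inl ⟨_, _, hE'⟩
  -- the membership condition
  set P : U → Prop := fun u => φm u * (φm u)⁻¹ = e ∧ (φm u)⁻¹ * φm u = e with hP_def
  have hPH : ∀ u : U, u ∈ Hclass f ↔ P u := by
    intro u
    rw [aux_mem_Hclass_iff hf]
    constructor
    · rintro ⟨h1, h2⟩
      exact ⟨by rw [← hinvm, ← hhom, h1], by rw [← hinvm, ← hhom, h2]⟩
    · rintro ⟨h1, h2⟩
      constructor
      · apply hinj; rw [hhom, hinvm]; exact h1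
      · apply hinj; rw [hhom, hinvm]; exact h2
  -- the homomorphism
  set Φ : U → Equiv.Perm S :=
    fun u => if h : P u then lmulPerm e (φm u) h.1 h.2 else 1 with hΦ_def
  have hap : ∀ (u : U), P u → ∀ x : S, Φ u x = lmulFun e (φm u) x := by
    intro u hu x
    simp only [hΦ_def]
    rw [dif_pos hu]
    rfl
  have hap1 : ∀ (u : U), P u → ∀ x : S, x * x⁻¹ = e → Φ u x = φm u * x := by
    intro u hu x hx
    rw [hap u hu x]
    unfold lmulFun
    rw [if_pos hx]
  have hap2 : ∀ (u : U), P u → ∀ x : S, ¬(x * x⁻¹ = e) → Φ u x = x := by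
    intro u hu x hx
    rw [hap u hu x]
    unfold lmulFun
    rw [if_neg hx]
  have hasymm : ∀ (u : U), P u → ∀ x : S, x * x⁻¹ = e → (Φ u).symm x = (φm u)⁻¹ * x := by
    intro u hu x hx
    have : (Φ u).symm x = lmulFun e (φm u)⁻¹ x := by
      simp only [hΦ_def]
      rw [dif_pos hu]
      rfl
    rw [this]
    unfold lmulFun
    rw [if_pos hx]
  have hinv1 : ∀ u : U, P u → (φm u)⁻¹ * ((φm u)⁻¹)⁻¹ = e := by
    intro u hu; rw [aux_inv_inv]; exact hu.2
  have hinv2 : ∀ u : U, P u → ((φm u)⁻¹)⁻¹ * (φm u)⁻¹ = e := by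
    intro u hu; rw [aux_inv_inv]; exact hu.1
  have heRcond : e * e⁻¹ = e := heRe
  have hΦe : ∀ u : U, P u → Φ u e = φm u := by
    intro u hu
    rw [hap1 u hu e heRcond]
    calc φm u * e = φm u * ((φm u)⁻¹ * φm u) := by rw [hu.2]
      _ = φm u * (φm u)⁻¹ * φm u := by rw [mul_assoc]
      _ = φm u := InverseSemigroup.mul_inv_mul _
  have hedge : ∀ u : U, P u → ∀ v a w, (schutzGraph fA e).E v a w →
      (schutzGraph fA e).E (Φ u v) a (Φ u w) := by
    intro u hu v a w hvw
    obtain ⟨hv, hw, x, hfa, hmul⟩ := (aux_schutz_E_iff fA e v a w).mp hvw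
    have hv' := (hgre v).mp hv
    have hw' := (hgre w).mp hw
    rw [hap1 u hu v hv', hap1 u hu w hw']
    refine (aux_schutz_E_iff fA e _ a _).mpr
      ⟨(hgre _).mpr (aux_lmul_stays hu.1 hu.2 hv'), (hgre _).mpr (aux_lmul_stays hu.1 hu.2 hw'),
        x, hfa, ?_⟩
    rw [← hmul, mul_assoc]
  have hauts : ∀ u : U, P u → Φ u ∈ AutSet (schutzGraph fA e) := by
    intro u hu
    refine ⟨⟨?_, (Φ u).injective.injOn, ?_⟩, ?_, ?_⟩
    · -- MapsTo
      intro x hx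
      rw [hsupp] at hx ⊢
      rw [hap1 u hu x hx]
      exact aux_lmul_stays hu.1 hu.2 hx
    · -- SurjOn
      intro y hy
      refine ⟨(Φ u).symm y, ?_, (Φ u).apply_symm_apply y⟩
      rw [hsupp] at hy ⊢
      rw [hasymm u hu y hy]
      exact aux_lmul_stays (hinv1 u hu) (hinv2 u hu) hy
    · -- edge iff
      intro v a w
      constructor
      · exact hedge u hu v a w
      · intro hvw
        by_cases hv : v * v⁻¹ = e
        · by_cases hw : w * w⁻¹ = e
          · rw [hap1 u hu v hv, hap1 u hu w hw] at hvw
            obtain ⟨_, _, x, hfa, hmul⟩ := (aux_schutz_E_iff fA e _ a _).mp hvw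
            refine (aux_schutz_E_iff fA e v a w).mpr ⟨(hgre v).mpr hv, (hgre w).mpr hw, x, hfa, ?_⟩
            calc v * x = (e * v) * x := by rw [hEx v hv]
              _ = (((φm u)⁻¹ * φm u) * v) * x := by rw [hu.2]
              _ = (φm u)⁻¹ * (φm u * v * x) := by simp only [mul_assoc]
              _ = (φm u)⁻¹ * (φm u * w) := by rw [hmul]
              _ = ((φm u)⁻¹ * φm u) * w := by simp only [mul_assoc]
              _ = w := by rw [hu.2, hEx w hw]
          · rw [hap2 u hu w hw] at hvw
            exact absurd ((hgre w).mp ((aux_schutz_E_iff fA e _ a _).mp hvw).2.1) hw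
        · rw [hap2 u hu v hv] at hvw
          exact absurd ((hgre v).mp ((aux_schutz_E_iff fA e _ a _).mp hvw).1) hv
    · -- fixes off support
      intro v hv
      rw [hsupp] at hv
      exact hap2 u hu v hv
  have hmapsI : ∀ u : U, P u →
      Set.MapsTo (⇑(Φ u))
        {y : S | ∃ u' : U, UPathS fA (schutzGraph fA e) e (φm u') y}
        {y : S | ∃ u' : U, UPathS fA (schutzGraph fA e) e (φm u') y} := by
    intro u hu y hy
    obtain ⟨u', l, hpath, hval⟩ := hy
    have hyR : y * y⁻¹ = e :=
      (hgre y).mp (aux_path_end_greenR hpath (aux_wordValO_ne_nil hval))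
    obtain ⟨lu, hlu⟩ := hgen (φm u)
    have hfu : e * φm u = φm u := hEx (φm u) hu.1
    have hpu := aux_path_of_word hlu ((hgre e).mpr heRcond)
      (by rw [hfu]; exact (hgre _).mpr hu.1)
    rw [hfu] at hpu
    have himg := aux_path_map (hedge u hu) hpath
    rw [hΦe u hu] at himg
    refine ⟨u * u', lu ++ l, aux_path_append hpu himg, ?_⟩
    rw [aux_wordValO_append hlu hval, ← hhom]
  refine ⟨Φ, ⟨?_, ?_, ?_⟩, ?_⟩
  · -- MapsTo
    intro u hu
    have hPu := (hPH u).mp hu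
    exact ⟨hauts u hPu, hmapsI u hPu⟩
  · -- InjOn
    intro a ha b hb hab
    have hPa := (hPH a).mp ha
    have hPb := (hPH b).mp hb
    have h : Φ a e = Φ b e := by rw [hab]
    rw [hΦe a hPa, hΦe b hPb] at h
    exact hinj h
  · -- SurjOn
    intro ψ hψ
    obtain ⟨⟨hbij, hiff, hfix⟩, hψI⟩ := hψ
    have heI : e ∈ {y : S | ∃ u' : U, UPathS fA (schutzGraph fA e) e (φm u') y} := by
      obtain ⟨lf, hlf⟩ := hgen e
      have hp := aux_path_of_word hlf ((hgre e).mpr heRcond)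
        (by rw [he]; exact (hgre e).mpr heRcond)
      rw [he] at hp
      exact ⟨f, lf, hp, by rw [hlf, he_def]⟩
    obtain ⟨u', l, hpath, hval⟩ := hψI heI
    have hend : ψ e = e * φm u' := aux_schutz_path_eval hpath hval
    set u : U := f * u' with hu_def
    have hc : φm u = ψ e := by rw [hu_def, hhom, ← he_def, ← hend]
    have heS : e ∈ (schutzGraph fA e).supp := (hsupp e).mpr heRcond
    have hψeS : ψ e ∈ (schutzGraph fA e).supp := hbij.1 heS
    have hcRe : φm u * (φm u)⁻¹ = e := by rw [hc]; exact (hsupp _).mp hψeS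
    have hψx : ∀ x : S, x * x⁻¹ = e → ψ x = φm u * x := by
      intro x hx
      obtain ⟨lx, hlx⟩ := hgen x
      have hex : e * x = x := hEx x hx
      have hp := aux_path_of_word hlx ((hgre e).mpr heRcond)
        (by rw [hex]; exact (hgre x).mpr hx)
      rw [hex] at hp
      have hp2 := aux_path_map (fun v a w h => (hiff v a w).mp h) hp
      have hev := aux_schutz_path_eval hp2 hlx
      rw [hev, ← hc]
    have hpow : ∀ n : ℕ, φm (spow u n) * (φm (spow u n))⁻¹ = e := by
      intro n
      induction n with
      | zero => exact hcRe
      | succ n ih =>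
        have hd : φm (spow u n) ∈ (schutzGraph fA e).supp := (hsupp _).mpr ih
        have hd2 := hbij.1 hd
        rw [hψx _ ih, ← hhom] at hd2
        exact (hsupp _).mp hd2
    have hpowU : ∀ n, spow u n * (spow u n)⁻¹ = f := by
      intro n
      apply hinj
      rw [hhom, hinvm, ← he_def]
      exact hpow n
    obtain ⟨m, hm⟩ := exists_spow_idem u
    have hmf : spow u m = f := by
      have h1 := hpowU m
      rw [aux_idem_inv hm] at h1
      rw [← h1]
      exact hm.symm
    have huuf : u * u⁻¹ = f := hpowU 0
    have hfu : f * u = u := by rw [← huuf, InverseSemigroup.mul_inv_mul]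
    have huf : u * f = u := by
      calc u * f = u * spow u m := by rw [hmf]
        _ = spow u m * u := spow_comm u m
        _ = f * u := by rw [hmf]
        _ = u := hfu
    have h1 : (u⁻¹ * u) * f = u⁻¹ * u := by rw [mul_assoc, huf]
    have h2 : f * (u⁻¹ * u) = f := by
      calc f * (u⁻¹ * u) = f * u⁻¹ * u := by rw [mul_assoc]
        _ = spow u m * u⁻¹ * u := by rw [hmf]
        _ = spow u m := spow_mul_inv_mul u m
        _ = f := hmf
    have hufL : u⁻¹ * u = f := by
      calc u⁻¹ * u = (u⁻¹ * u) * f := h1.symm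
        _ = f * (u⁻¹ * u) := aux_idem_comm (aux_idem_inv_mul u) hf
        _ = f := h2
    have hPu : P u := ⟨hcRe, by rw [← hinvm, ← hhom, hufL, ← he_def]⟩
    refine ⟨u, (hPH u).mpr hPu, ?_⟩
    apply Equiv.ext
    intro x
    by_cases hx : x * x⁻¹ = e
    · rw [hap1 u hPu x hx, hψx x hx]
    · rw [hap2 u hPu x hx, hfix x (fun hmem => hx ((hsupp x).mp hmem))]
  · -- multiplicativity
    intro a ha b hb
    have hPa := (hPH a).mp ha
    have hPb := (hPH b).mp hb
    have hPab : P (a * b) := by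
      constructor
      · rw [hhom]; exact aux_lmul_stays hPa.1 hPa.2 hPb.1
      · rw [hhom]; exact aux_lmul_stays2 hPa.2 hPb.1 hPb.2
    refine ⟨(hPH _).mpr hPab, ?_⟩
    apply Equiv.ext
    intro x
    rw [Equiv.Perm.mul_apply]
    by_cases hx : x * x⁻¹ = e
    · rw [hap1 b hPb x hx, hap1 a hPa _ (aux_lmul_stays hPb.1 hPb.2 hx),
        hap1 (a * b) hPab x hx, hhom, mul_assoc]
    · rw [hap2 b hPb x hx, hap2 a hPa x hx, hap2 (a * b) hPab x hx]
theorem maximal_subgroup_of_U_iso_net_preserving_automorphisms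
    {U S1 S2 X1 X2 : Type}
    [InverseSemigroup U] [InverseSemigroup S1] [InverseSemigroup S2]
    [Finite U] [Finite S1] [Finite S2]
    (AD : AmalgamData U S1 S2)
    (g1 : X1 → S1) (g2 : X2 → S2) (hg1 : GeneratesInv g1) (hg2 : GeneratesInv g2)
    (f : U) (hf : IsIdem f) :
    -- case k = 1
    SubMulIso (Hclass f)
      {φ : Equiv.Perm S1 |
        φ ∈ AutSet (schutzGraph (letterS1 (X2 := X2) g1) (AD.φ1 f)) ∧
        Set.MapsTo (⇑φ)
          {y : S1 | ∃ u : U, UPathS (letterS1 (X2 := X2) g1)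
            (schutzGraph (letterS1 (X2 := X2) g1) (AD.φ1 f)) (AD.φ1 f) (AD.φ1 u) y}
          {y : S1 | ∃ u : U, UPathS (letterS1 (X2 := X2) g1)
            (schutzGraph (letterS1 (X2 := X2) g1) (AD.φ1 f)) (AD.φ1 f) (AD.φ1 u) y}} ∧
    -- case k = 2
    SubMulIso (Hclass f)
      {φ : Equiv.Perm S2 |
        φ ∈ AutSet (schutzGraph (letterS2 (X1 := X1) g2) (AD.φ2 f)) ∧
        Set.MapsTo (⇑φ)
          {y : S2 | ∃ u : U, UPathS (letterS2 (X1 := X1) g2)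
            (schutzGraph (letterS2 (X1 := X1) g2) (AD.φ2 f)) (AD.φ2 f) (AD.φ2 u) y}
          {y : S2 | ∃ u : U, UPathS (letterS2 (X1 := X1) g2)
            (schutzGraph (letterS2 (X1 := X1) g2) (AD.φ2 f)) (AD.φ2 f) (AD.φ2 u) y}} := by
  constructor
  · refine aux_key_iso (letterS1 (X2 := X2) g1) AD.φ1 AD.hom1 AD.inj1 ?_ f hf
    intro t
    have ht := hg1 t
    induction ht using Subsemigroup.closure_induction with
    | mem x hx =>
      rcases hx with ⟨x1, rfl⟩ | ⟨x1, rfl⟩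
      · exact ⟨[(Sum.inl x1, false)], by simp [wordValO, letterS1]⟩
      · exact ⟨[(Sum.inl x1, true)], by simp [wordValO, letterS1]⟩
    | mul x y hx hy ihx ihy =>
      obtain ⟨l1, h1⟩ := ihx
      obtain ⟨l2, h2⟩ := ihy
      exact ⟨l1 ++ l2, aux_wordValO_append h1 h2⟩
  · refine aux_key_iso (letterS2 (X1 := X1) g2) AD.φ2 AD.hom2 AD.inj2 ?_ f hf
    intro t
    have ht := hg2 t
    induction ht using Subsemigroup.closure_induction with
    | mem x hx =>
      rcases hx with ⟨x1, rfl⟩ | ⟨x1, rfl⟩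
      · exact ⟨[(Sum.inr x1, false)], by simp [wordValO, letterS2]⟩
      · exact ⟨[(Sum.inr x1, true)], by simp [wordValO, letterS2]⟩
    | mul x y hx hy ihx ihy =>
      obtain ⟨l1, h1⟩ := ihx
      obtain ⟨l2, h2⟩ := ihy
      exact ⟨l1 ++ l2, aux_wordValO_append h1 h2⟩
end

section
/- Let (ν, Δ, ν) be a closed inverse automaton relative to the presentation ⟨X_k | R_k⟩ of the finite inverse semigroup S_k for some k ∈ {1,2}, and let (α, Σ, α) be its maximum determinizing Schützenberger automaton with π : (α, Σ, α) → (ν, Δ, ν) the natural homomorphism, π(α) = ν. Then every automorphism φ ∈ Aut(Δ) can be lifted to an automorphism ψ ∈ Aut(Σ) with ψ ∘ π = π ∘ φ. Moreover, there is a group epimorphism from the subgroup H := {ψ ∈ Aut(Σ) : ∃ φ ∈ Aut(Δ), ψ ∘ π = π ∘ φ} of Aut(Σ) onto Aut(Δ) whose kernel is N = H ∩ S, where S = {ψ ∈ Aut(Σ) : ψ(π^{-1}(ν)) ⊆ π^{-1}(ν)}. -/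
/-! ## STATEMENT 18
Let `(ν, Δ, ν)` be a closed inverse automaton relative to the presentation of a finite
inverse semigroup `T` (= `S_k`), and let `(α, Σ, α)` be its maximum determinizing
Schützenberger automaton (the Schützenberger automaton of the minimum idempotent `e`
labelling a loop at `ν`), with natural homomorphism `π : Σ → Δ`, `π(α) = ν`.
Then every automorphism of `Δ` lifts to an automorphism of `Σ` commuting with `π`, and
there is a group epimorphism from `H = {ψ ∈ Aut(Σ) : ψ projects to some φ ∈ Aut(Δ)}`
onto `Aut(Δ)` with kernel `N = H ∩ S`, `S = {ψ ∈ Aut(Σ) : ψ(π⁻¹(ν)) ⊆ π⁻¹(ν)}`. -/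

/-- Evaluation of letters (with formal inverses) of a single presentation. -/
def letterMono {X T : Type} [InverseSemigroup T] (g : X → T) : X × Bool → Option T :=
  fun a => some (if a.2 then (g a.1)⁻¹ else g a.1)

namespace IS18
variable {T : Type} [InverseSemigroup T]

theorem mim (a : T) : a * a⁻¹ * a = a := InverseSemigroup.mul_inv_mul a
theorem imi (a : T) : a⁻¹ * a * a⁻¹ = a⁻¹ := InverseSemigroup.inv_mul_inv a

theorem inv_of_idem {a : T} (h : IsIdem a) : a⁻¹ = a :=
  (InverseSemigroup.inv_unique (by rw [h, h]) (by rw [h, h])).symm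

theorem inv_inv (a : T) : (a⁻¹)⁻¹ = a :=
  (InverseSemigroup.inv_unique (imi a) (mim a)).symm

theorem idem_mul_inv (a : T) : IsIdem (a * a⁻¹) := by
  show a * a⁻¹ * (a * a⁻¹) = a * a⁻¹
  rw [← mul_assoc, mim]

theorem idem_inv_mul (a : T) : IsIdem (a⁻¹ * a) := by
  show a⁻¹ * a * (a⁻¹ * a) = a⁻¹ * a
  rw [← mul_assoc, imi]

theorem idem_mul_idem {p q : T} (hp : IsIdem p) (hq : IsIdem q) : IsIdem (p * q) := by
  have hb : q * (p*q)⁻¹ * p = (p*q)⁻¹ := by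
    apply InverseSemigroup.inv_unique
    · -- (p*q) * (q * (p*q)⁻¹ * p) * (p*q) = p*q
      have : p * q * (q * (p*q)⁻¹ * p) * (p * q) = p * q * (p*q)⁻¹ * (p * q) := by
        simp only [mul_assoc]
        rw [← mul_assoc q q, hq, ← mul_assoc p p, hp]
      rw [this, mim]
    · -- (q * (p*q)⁻¹ * p) * (p*q) * (q * (p*q)⁻¹ * p) = q * (p*q)⁻¹ * p
      have : q * (p*q)⁻¹ * p * (p * q) * (q * (p*q)⁻¹ * p)
           = q * ((p*q)⁻¹ * (p * q) * (p*q)⁻¹) * p := by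
        simp only [mul_assoc]
        rw [← mul_assoc p p, hp, ← mul_assoc q q, hq]
      rw [this, imi]
  -- (p*q)⁻¹ is idempotent
  have hidem : IsIdem ((p*q)⁻¹) := by
    show (p*q)⁻¹ * (p*q)⁻¹ = (p*q)⁻¹
    conv_lhs => rw [← hb]
    calc q * (p*q)⁻¹ * p * (q * (p*q)⁻¹ * p)
        = q * ((p*q)⁻¹ * (p * q) * (p*q)⁻¹) * p := by simp only [mul_assoc]
      _ = q * (p*q)⁻¹ * p := by rw [imi]
      _ = (p*q)⁻¹ := hb
  have : p * q = (p*q)⁻¹ := by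
    rw [← inv_of_idem hidem, inv_inv]
  show p * q * (p * q) = p * q
  rw [this]; exact hidem

theorem idem_comm {p q : T} (hp : IsIdem p) (hq : IsIdem q) : p * q = q * p := by
  have h1 : IsIdem (p * q) := idem_mul_idem hp hq
  have h2 : IsIdem (q * p) := idem_mul_idem hq hp
  have : q * p = (p * q)⁻¹ := by
    apply InverseSemigroup.inv_unique
    · calc p * q * (q * p) * (p * q) = p * (q * q) * (p * p) * q := by simp only [mul_assoc]
        _ = p * q * (p * q) := by rw [hq, hp]; simp only [mul_assoc]
        _ = p * q := h1
    · calc q * p * (p * q) * (q * p) = q * (p * p) * (q * q) * p := by simp only [mul_assoc]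
        _ = q * p * (q * p) := by rw [hq, hp]; simp only [mul_assoc]
        _ = q * p := h2
  rw [this, inv_of_idem h1]

theorem mul_inv_rev (a b : T) : (a * b)⁻¹ = b⁻¹ * a⁻¹ := by
  symm
  apply InverseSemigroup.inv_unique
  · calc a * b * (b⁻¹ * a⁻¹) * (a * b) = a * ((b * b⁻¹) * (a⁻¹ * a)) * b := by
          simp only [mul_assoc]
      _ = a * ((a⁻¹ * a) * (b * b⁻¹)) * b := by rw [idem_comm (idem_mul_inv b) (idem_inv_mul a)]
      _ = (a * a⁻¹ * a) * (b * b⁻¹ * b) := by simp only [mul_assoc]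
      _ = a * b := by rw [mim, mim]
  · calc b⁻¹ * a⁻¹ * (a * b) * (b⁻¹ * a⁻¹) = b⁻¹ * ((a⁻¹ * a) * (b * b⁻¹)) * a⁻¹ := by
          simp only [mul_assoc]
      _ = b⁻¹ * ((b * b⁻¹) * (a⁻¹ * a)) * a⁻¹ := by rw [idem_comm (idem_inv_mul a) (idem_mul_inv b)]
      _ = (b⁻¹ * b * b⁻¹) * (a⁻¹ * a * a⁻¹) := by simp only [mul_assoc]
      _ = b⁻¹ * a⁻¹ := by rw [imi, imi]

end IS18


namespace IS18
variable {T : Type} [InverseSemigroup T]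

theorem mem_rIdeal_self (a : T) : a ∈ rIdeal a := Set.mem_insert _ _

theorem mul_mem_rIdeal (a x : T) : a * x ∈ rIdeal a :=
  Set.mem_insert_iff.mpr (Or.inr ⟨x, rfl⟩)

theorem rIdeal_mul_subset (a x : T) : rIdeal (a * x) ⊆ rIdeal a := by
  rintro b hb
  rcases Set.mem_insert_iff.mp hb with rfl | ⟨s, rfl⟩
  · exact mul_mem_rIdeal a x
  · rw [mul_assoc]; exact mul_mem_rIdeal a _

theorem rIdeal_le {a b : T} (h : b ∈ rIdeal a) : rIdeal b ⊆ rIdeal a := by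
  rcases Set.mem_insert_iff.mp h with rfl | ⟨s, rfl⟩
  · exact subset_rfl
  · exact rIdeal_mul_subset a s

theorem greenR_refl (a : T) : GreenR a a := rfl

theorem greenR_iff {e : T} (he : IsIdem e) (s : T) : GreenR s e ↔ s * s⁻¹ = e := by
  have hee : e⁻¹ = e := inv_of_idem he
  constructor
  · intro h
    have hs : s ∈ rIdeal e := h ▸ mem_rIdeal_self s
    have hes : e ∈ rIdeal s := h ▸ mem_rIdeal_self e
    have hj : IsIdem (s * s⁻¹) := idem_mul_inv s
    rcases Set.mem_insert_iff.mp hs with rfl | ⟨x, hx⟩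
    · rw [hee]; exact he
    · -- s = e * x
      have h1 : e * (s * s⁻¹) = s * s⁻¹ := by
        have : e * s = s := by rw [hx, ← mul_assoc, he]
        rw [← mul_assoc, this]
      rcases Set.mem_insert_iff.mp hes with rfl | ⟨y, hy⟩
      · -- e = s, so s idempotent
        rw [inv_of_idem he]; exact he
      · have h2 : (s * s⁻¹) * e = e := by
          rw [hy, ← mul_assoc, mul_assoc s s⁻¹ s, ← mul_assoc s, mim]
        have := idem_comm hj he
        rw [this] at h2
        rw [← h1, h2]
  · intro h
    have h1 : s ∈ rIdeal e := by
      have : e * s = s := by rw [← h]; exact mim s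
      rw [← this]; exact mul_mem_rIdeal e s
    have h2 : e ∈ rIdeal s := by rw [← h]; exact mul_mem_rIdeal s s⁻¹
    exact Set.Subset.antisymm (rIdeal_le h1) (rIdeal_le h2)

theorem greenR_absorb {e s : T} (he : IsIdem e) (h : GreenR s e) : e * s = s := by
  rw [← (greenR_iff he s).mp h]; exact mim s

end IS18

namespace IS18
variable {T X : Type} [InverseSemigroup T]

/-- Value of a single letter. -/
def mval (g : X → T) (a : X × Bool) : T := if a.2 then (g a.1)⁻¹ else g a.1

theorem letterMono_eq (g : X → T) (a : X × Bool) : letterMono g a = some (mval g a) := rfl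

theorem wordVal_singleton (g : X → T) (a : X × Bool) :
    wordValO (letterMono g) [a] = some (mval g a) := rfl

theorem wordVal_cons_some (g : X → T) {l : List (X × Bool)} {y : T} (a : X × Bool)
    (h : wordValO (letterMono g) l = some y) :
    wordValO (letterMono g) (a :: l) = some (mval g a * y) := by
  simp [wordValO, letterMono_eq, h]

theorem wordVal_total (g : X → T) : ∀ l : List (X × Bool), l ≠ [] →
    ∃ t, wordValO (letterMono g) l = some t
  | [], h => absurd rfl h
  | [a], _ => ⟨mval g a, wordVal_singleton g a⟩
  | a :: b :: l, _ => by
    obtain ⟨y, hy⟩ := wordVal_total g (b :: l) (by simp)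
    exact ⟨mval g a * y, wordVal_cons_some g a hy⟩

theorem wordVal_cons_inv (g : X → T) {l : List (X × Bool)} {a : X × Bool} {t : T}
    (hl : l ≠ []) (h : wordValO (letterMono g) (a :: l) = some t) :
    ∃ y, wordValO (letterMono g) l = some y ∧ t = mval g a * y := by
  obtain ⟨y, hy⟩ := wordVal_total g l hl
  refine ⟨y, hy, ?_⟩
  rw [wordVal_cons_some g a hy] at h
  exact (Option.some.inj h).symm

theorem wordVal_append (g : X → T) : ∀ (l1 : List (X × Bool)) {l2 : List (X × Bool)}
    {t1 t2 : T}, wordValO (letterMono g) l1 = some t1 →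
    wordValO (letterMono g) l2 = some t2 →
    wordValO (letterMono g) (l1 ++ l2) = some (t1 * t2)
  | [], _, _, _, h1, _ => by simp [wordValO] at h1
  | [a], l2, t1, t2, h1, h2 => by
    rw [wordVal_singleton] at h1
    rw [List.singleton_append, wordVal_cons_some g a h2, Option.some.inj h1]
  | a :: b :: l, l2, t1, t2, h1, h2 => by
    obtain ⟨y, hy, rfl⟩ := wordVal_cons_inv g (by simp) h1
    rw [List.cons_append, wordVal_cons_some g a (wordVal_append g (b :: l) hy h2), mul_assoc]

end IS18

namespace IS18

/-- General path lemmas. -/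
theorem path_append {V A : Type} {G : LGraph V A} {p q r : V} {l1 l2 : List A}
    (h1 : G.Path p l1 q) (h2 : G.Path q l2 r) : G.Path p (l1 ++ l2) r := by
  induction h1 with
  | nil => exact h2
  | cons e _ ih => exact LGraph.Path.cons e (ih h2)

theorem path_det {V A : Type} {G : LGraph V A} (hdet : IsDeterministic G) :
    ∀ {l : List A} {p q q' : V}, G.Path p l q → G.Path p l q' → q = q'
  | [], p, q, q', h1, h2 => by cases h1; cases h2; rfl
  | a :: l, p, q, q', h1, h2 => by
    cases h1 with | cons e1 p1 =>
    cases h2 with | cons e2 p2 =>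
    have := hdet _ _ _ _ e1 e2
    subst this
    exact path_det hdet p1 p2

theorem path_map {V V' A : Type} {G : LGraph V A} {H : LGraph V' A} {φ : V → V'}
    (hφ : ∀ v a w, G.E v a w → H.E (φ v) a (φ w)) {p q : V} {l : List A}
    (h : G.Path p l q) : H.Path (φ p) l (φ q) := by
  induction h with
  | nil => exact LGraph.Path.nil _
  | cons e _ ih => exact LGraph.Path.cons (hφ _ _ _ e) ih

theorem path_mem_supp {V A : Type} {G : LGraph V A} {p q : V} {l : List A}
    (h : G.Path p l q) (hl : l ≠ []) : p ∈ G.supp ∧ q ∈ G.supp := by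
  induction h with
  | nil => exact absurd rfl hl
  | @cons v w x a l' e p' ih =>
    refine ⟨Or.inl ⟨a, w, e⟩, ?_⟩
    rcases p' with _ | @⟨_, w', _, a', l'', e', p''⟩
    · exact Or.inr ⟨a, v, e⟩
    · exact (ih (by simp)).2

end IS18

namespace IS18
variable {T X : Type} [InverseSemigroup T]

theorem sgE_iff (g : X → T) (e : T) (s t : T) (a : X × Bool) :
    (schutzGraph (letterMono g) e).E s a t ↔
      GreenR s e ∧ GreenR t e ∧ s * mval g a = t := by
  constructor
  · rintro ⟨h1, h2, x, hx, hsx⟩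
    rw [letterMono_eq] at hx
    exact ⟨h1, h2, (Option.some.inj hx) ▸ hsx⟩
  · rintro ⟨h1, h2, h3⟩
    exact ⟨h1, h2, mval g a, rfl, h3⟩

theorem sg_path_val (g : X → T) (e : T) :
    ∀ {l : List (X × Bool)} {p q t : T},
    (schutzGraph (letterMono g) e).Path p l q →
    wordValO (letterMono g) l = some t → p * t = q
  | [], _, _, _, _, hv => by simp [wordValO] at hv
  | [a], p, q, t, hp, hv => by
    rw [wordVal_singleton] at hv
    cases hp with | cons ed p1 =>
    cases p1
    rw [← Option.some.inj hv]
    exact ((sgE_iff g e _ _ a).mp ed).2.2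
  | a :: b :: l, p, q, t, hp, hv => by
    obtain ⟨y, hy, rfl⟩ := wordVal_cons_inv g (by simp) hv
    cases hp with | cons ed p1 =>
    have h1 := ((sgE_iff g e _ _ a).mp ed).2.2
    rw [← mul_assoc, h1]
    exact sg_path_val g e p1 hy

theorem sg_path_green (g : X → T) (e : T) {l : List (X × Bool)} {p q : T}
    (hp : (schutzGraph (letterMono g) e).Path p l q) (hl : l ≠ []) :
    GreenR p e ∧ GreenR q e := by
  induction hp with
  | nil => exact absurd rfl hl
  | @cons v w x a l' ed p' ih =>
    refine ⟨((sgE_iff g e _ _ a).mp ed).1, ?_⟩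
    rcases p' with _ | @⟨_, w', _, a', l'', ed', p''⟩
    · exact ((sgE_iff g e _ _ a).mp ed).2.1
    · exact (ih (by simp)).2

theorem sg_path_exists (g : X → T) (e : T) :
    ∀ {l : List (X × Bool)} {p t : T}, GreenR p e →
    wordValO (letterMono g) l = some t → GreenR (p * t) e →
    (schutzGraph (letterMono g) e).Path p l (p * t)
  | [], _, _, _, hv, _ => by simp [wordValO] at hv
  | [a], p, t, hg, hv, hgt => by
    rw [wordVal_singleton] at hv
    rw [← Option.some.inj hv] at hgt ⊢
    exact LGraph.Path.cons ((sgE_iff g e p _ a).mpr ⟨hg, hgt, rfl⟩) (LGraph.Path.nil _)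
  | a :: b :: l, p, t, hg, hv, hgt => by
    obtain ⟨y, hy, rfl⟩ := wordVal_cons_inv g (by simp) hv
    have hgt' : rIdeal (p * (mval g a * y)) = rIdeal e := hgt
    have hg' : rIdeal p = rIdeal e := hg
    have hgx : GreenR (p * mval g a) e := by
      have h1 : rIdeal (p * (mval g a * y)) ⊆ rIdeal (p * mval g a) := by
        rw [← mul_assoc]; exact rIdeal_mul_subset _ y
      have h2 : rIdeal (p * mval g a) ⊆ rIdeal e := hg' ▸ rIdeal_mul_subset p _
      have h3 : rIdeal e ⊆ rIdeal (p * mval g a) := hgt' ▸ h1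
      exact Set.Subset.antisymm h2 h3
    have hgx2 : GreenR (p * mval g a * y) e := by
      show rIdeal (p * mval g a * y) = rIdeal e
      rw [mul_assoc]; exact hgt'
    have hrec := sg_path_exists g e hgx hy hgx2
    rw [mul_assoc] at hrec
    rw [← mul_assoc]
    rw [← mul_assoc] at hrec
    exact LGraph.Path.cons ((sgE_iff g e p _ a).mpr ⟨hg, hgx, rfl⟩) hrec

end IS18


namespace IS18

theorem one_mem_AutSet {V A : Type} (G : LGraph V A) : (1 : Equiv.Perm V) ∈ AutSet G := by
  refine ⟨?_, fun v a w => by simp, fun v _ => rfl⟩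
  simpa using Set.bijOn_id G.supp

theorem mul_mem_AutSet {V A : Type} {G : LGraph V A} {a b : Equiv.Perm V}
    (ha : a ∈ AutSet G) (hb : b ∈ AutSet G) : a * b ∈ AutSet G := by
  obtain ⟨ha1, ha2, ha3⟩ := ha
  obtain ⟨hb1, hb2, hb3⟩ := hb
  refine ⟨?_, fun v x w => ?_, fun v hv => ?_⟩
  · have := Set.BijOn.comp ha1 hb1
    simpa [Function.comp] using this
  · rw [hb2 v x w, ha2 (b v) x (b w)]; rfl
  · show a (b v) = v
    rw [hb3 v hv, ha3 v hv]

theorem inv_mem_AutSet {V A : Type} {G : LGraph V A} {a : Equiv.Perm V}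
    (ha : a ∈ AutSet G) : a⁻¹ ∈ AutSet G := by
  obtain ⟨ha1, ha2, ha3⟩ := ha
  have hsymm : ∀ v, (a⁻¹ : Equiv.Perm V) v = a.symm v := fun v => rfl
  refine ⟨⟨fun v hv => ?_, fun v _ w _ h => a.symm.injective h, fun v hv => ?_⟩,
    fun v x w => ?_, fun v hv => ?_⟩
  · obtain ⟨w, hw, hwv⟩ := ha1.surjOn hv
    rw [hsymm, ← hwv, Equiv.symm_apply_apply]; exact hw
  · exact ⟨a v, ha1.mapsTo hv, by rw [hsymm, Equiv.symm_apply_apply]⟩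
  · rw [hsymm, hsymm]
    constructor
    · intro h
      have := (ha2 (a.symm v) x (a.symm w)).mpr
      simp only [Equiv.apply_symm_apply] at this
      exact this h
    · intro h
      have := (ha2 (a.symm v) x (a.symm w)).mp h
      simpa using this
  · rw [hsymm]
    conv_lhs => rw [← ha3 v hv]
    exact a.symm_apply_apply v

theorem autset_path {V A : Type} {G : LGraph V A} {φ : Equiv.Perm V}
    (hφ : φ ∈ AutSet G) {p q : V} {l : List A} (h : G.Path p l q) :
    G.Path (φ p) l (φ q) :=
  path_map (fun v a w h' => (hφ.2.1 v a w).mp h') h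

theorem val_ne_nil {T X : Type} [InverseSemigroup T] {g : X → T} {l : List (X × Bool)}
    {t : T} (h : wordValO (letterMono g) l = some t) : l ≠ [] := by
  rintro rfl; simp [wordValO] at h

/-- Reversed path with inverted letters. -/
def revBar {X : Type} (l : List (X × Bool)) : List (X × Bool) :=
  (l.map (fun a => (a.1, !a.2))).reverse

theorem path_rev {V X : Type} {Δ : LGraph V (X × Bool)}
    (hinv : ∀ v a w, Δ.E v a w → Δ.E w (a.1, !a.2) v) {p q : V} {l : List (X × Bool)}
    (h : Δ.Path p l q) : Δ.Path q (revBar l) p := by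
  induction h with
  | nil => exact LGraph.Path.nil _
  | @cons v w x a l' e _ ih =>
    have h1 : Δ.Path w [(a.1, !a.2)] v :=
      LGraph.Path.cons (hinv v a w e) (LGraph.Path.nil _)
    have : revBar (a :: l') = revBar l' ++ [(a.1, !a.2)] := by
      simp [revBar]
    rw [this]
    exact path_append ih h1

theorem mval_bar {T X : Type} [InverseSemigroup T] (g : X → T) (a : X × Bool) :
    mval g (a.1, !a.2) = (mval g a)⁻¹ := by
  rcases a with ⟨x, _ | _⟩
  · simp [mval]
  · simp [mval, inv_inv]

theorem wordVal_revBar {T X : Type} [InverseSemigroup T] (g : X → T) :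
    ∀ {l : List (X × Bool)} {t : T}, wordValO (letterMono g) l = some t →
      wordValO (letterMono g) (revBar l) = some t⁻¹
  | [], t, h => by simp [wordValO] at h
  | [a], t, h => by
    rw [wordVal_singleton] at h
    have : revBar [a] = [(a.1, !a.2)] := by simp [revBar]
    rw [this, wordVal_singleton, mval_bar, Option.some.inj h]
  | a :: b :: l, t, h => by
    obtain ⟨y, hy, rfl⟩ := wordVal_cons_inv g (by simp) h
    have h1 : revBar (a :: b :: l) = revBar (b :: l) ++ [(a.1, !a.2)] := by simp [revBar]
    rw [h1, wordVal_append g _ (wordVal_revBar g hy) (wordVal_singleton g _),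
      mval_bar, ← mul_inv_rev]

theorem conn_word {V X : Type} {Δ : LGraph V (X × Bool)}
    (hinv : ∀ v a w, Δ.E v a w → Δ.E w (a.1, !a.2) v) (hconn : GConn Δ)
    {ν w : V} (hν : ν ∈ Δ.supp) (hw : w ∈ Δ.supp) : ∃ l, Δ.Path ν l w := by
  have h := hconn ν hν w hw
  induction h with
  | refl => exact ⟨[], LGraph.Path.nil _⟩
  | tail _ hstep ih =>
    obtain ⟨a, h1 | h1⟩ := hstep
    · obtain ⟨l, hl⟩ := ih (Or.inl ⟨a, _, h1⟩)
      exact ⟨l ++ [a], path_append hl (LGraph.Path.cons h1 (LGraph.Path.nil _))⟩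
    · obtain ⟨l, hl⟩ := ih (Or.inr ⟨a, _, h1⟩)
      exact ⟨l ++ [(a.1, !a.2)],
        path_append hl (LGraph.Path.cons (hinv _ _ _ h1) (LGraph.Path.nil _))⟩

theorem conj_idem {T : Type} [InverseSemigroup T] {p : T} (t : T) (hp : IsIdem p) :
    IsIdem (t * p * t⁻¹) := by
  have hc : p * (t⁻¹ * t) = (t⁻¹ * t) * p := idem_comm hp (idem_inv_mul t)
  show t * p * t⁻¹ * (t * p * t⁻¹) = t * p * t⁻¹
  calc t * p * t⁻¹ * (t * p * t⁻¹) = t * (p * (t⁻¹ * t)) * (p * t⁻¹) := by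
        simp only [mul_assoc]
    _ = t * ((t⁻¹ * t) * p) * (p * t⁻¹) := by rw [hc]
    _ = (t * t⁻¹ * t) * (p * p) * t⁻¹ := by simp only [mul_assoc]
    _ = t * p * t⁻¹ := by rw [mim, hp]

theorem exists_word {T X : Type} [InverseSemigroup T] {g : X → T} (hg : GeneratesInv g)
    (t : T) : ∃ l, wordValO (letterMono g) l = some t := by
  have h := hg t
  induction h using Subsemigroup.closure_induction with
  | mem x hx =>
    rcases hx with ⟨x', rfl⟩ | ⟨x', rfl⟩
    · exact ⟨[(x', false)], rfl⟩
    · exact ⟨[(x', true)], rfl⟩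
  | mul x y _ _ ihx ihy =>
    obtain ⟨l1, h1⟩ := ihx
    obtain ⟨l2, h2⟩ := ihy
    exact ⟨l1 ++ l2, wordVal_append g l1 h1 h2⟩

end IS18


namespace IS18

theorem supp_sg {T X : Type} [InverseSemigroup T] {g : X → T} (hg : GeneratesInv g)
    {e : T} (he : IsIdem e) (s : T) :
    s ∈ (schutzGraph (letterMono g) e).supp ↔ GreenR s e := by
  constructor
  · rintro (⟨a, w, hE⟩ | ⟨a, w, hE⟩)
    · exact ((sgE_iff g e _ _ a).mp hE).1
    · exact ((sgE_iff g e _ _ a).mp hE).2.1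
  · intro h
    obtain ⟨l, hl⟩ := exists_word hg s
    have hes : e * s = s := greenR_absorb he h
    have hp := sg_path_exists g e (greenR_refl e) hl (by rw [hes]; exact h)
    rw [hes] at hp
    exact (path_mem_supp hp (val_ne_nil hl)).2

theorem pathA {T X V : Type} [InverseSemigroup T] {g : X → T}
    {Δ : LGraph V (X × Bool)} {ν : V} {e : T} (he : IsIdem e) {π : T → V}
    (hπ3 : ∀ v a w, (schutzGraph (letterMono g) e).E v a w → Δ.E (π v) a (π w))
    (hπ4 : π e = ν) {s : T} {l : List (X × Bool)}
    (hgr : GreenR s e) (hl : wordValO (letterMono g) l = some s) :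
    Δ.Path ν l (π s) := by
  have hes : e * s = s := greenR_absorb he hgr
  have hp := sg_path_exists g e (greenR_refl e) hl (by rw [hes]; exact hgr)
  rw [hes] at hp
  have h2 := path_map hπ3 hp
  rwa [hπ4] at h2

theorem lift {T X V : Type} [InverseSemigroup T] [Finite T]
    (g : X → T) (hg : GeneratesInv g)
    (Δ : LGraph V (X × Bool)) (ν : V) (hν : ν ∈ Δ.supp)
    (hinv : ∀ v a w, Δ.E v a w → Δ.E w (a.1, !a.2) v)
    (hdet : IsDeterministic Δ) (hconn : GConn Δ)
    (e : T) (hmin : MinIdemLoopAt (letterMono g) Δ ν e)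
    (π : T → V)
    (hπ3 : ∀ v a w, (schutzGraph (letterMono g) e).E v a w → Δ.E (π v) a (π w))
    (hπ4 : π e = ν)
    (φ : Equiv.Perm V) (hφ : φ ∈ AutSet Δ) :
    ∃ ψ : Equiv.Perm T, ψ ∈ AutSet (schutzGraph (letterMono g) e) ∧
      ∀ v ∈ (schutzGraph (letterMono g) e).supp, π (ψ v) = φ (π v) := by
  classical
  have he : IsIdem e := hmin.2.1
  have hee : e⁻¹ = e := inv_of_idem he
  have hminloop : ∀ t, (∃ l, Δ.Path ν l ν ∧ wordValO (letterMono g) l = some t) →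
      IsIdem t → e * t = e := fun t h ht => hmin.2.2 t h ht
  obtain ⟨le, hleP, hleV⟩ := hmin.1
  have hφν : φ ν ∈ Δ.supp := hφ.1.mapsTo hν
  obtain ⟨l₀, hl₀⟩ := conn_word hinv hconn hν hφν
  have huP : Δ.Path ν (le ++ l₀) (φ ν) := path_append hleP hl₀
  obtain ⟨t, huV⟩ : ∃ t, wordValO (letterMono g) (le ++ l₀) = some t := by
    rcases eq_or_ne l₀ [] with rfl | h0
    · exact ⟨e, by simpa using hleV⟩
    · obtain ⟨t₀, h₀⟩ := wordVal_total g l₀ h0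
      exact ⟨e * t₀, wordVal_append g le hleV h₀⟩
  set u := le ++ l₀ with hu_def
  have hubarP : Δ.Path (φ ν) (revBar u) ν := path_rev hinv huP
  have hubarV := wordVal_revBar g huV
  have loop1 : e * (t * t⁻¹) = e := by
    apply hminloop
    · exact ⟨u ++ revBar u, path_append huP hubarP, wordVal_append g u huV hubarV⟩
    · exact idem_mul_inv t
  have hleφ : Δ.Path (φ ν) le (φ ν) := autset_path hφ hleP
  have loop2 : e * (t * (e * t⁻¹)) = e := by
    apply hminloop
    · exact ⟨u ++ (le ++ revBar u), path_append huP (path_append hleφ hubarP),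
        wordVal_append g u huV (wordVal_append g le hleV hubarV)⟩
    · have h := conj_idem t he
      rwa [mul_assoc] at h
  have hφinv := inv_mem_AutSet hφ
  have loop3 : e * (t⁻¹ * (e * t)) = e := by
    apply hminloop
    · refine ⟨revBar u ++ (le ++ u), ?_, ?_⟩
      · have hp : Δ.Path (φ ν) (revBar u ++ (le ++ u)) (φ ν) :=
          path_append hubarP (path_append hleP huP)
        have h2 := autset_path hφinv hp
        simpa using h2
      · exact wordVal_append g _ hubarV (wordVal_append g le hleV huV)
    · have h := conj_idem t⁻¹ he
      rwa [inv_inv, mul_assoc] at h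
  set f := e * t with hf_def
  have hfinv : f⁻¹ = t⁻¹ * e := by rw [hf_def, mul_inv_rev, hee]
  have h_ff : f * f⁻¹ = e := by
    rw [hfinv, hf_def]
    calc e * t * (t⁻¹ * e) = (e * (t * t⁻¹)) * e := by simp only [mul_assoc]
      _ = e * e := by rw [loop1]
      _ = e := he
  set i := t⁻¹ * (e * t) with hi_def
  have h_if : f⁻¹ * f = i := by
    rw [hfinv, hf_def, hi_def]
    calc t⁻¹ * e * (e * t) = t⁻¹ * (e * e * t) := by simp only [mul_assoc]
      _ = t⁻¹ * (e * t) := by rw [he]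
  have hi_idem : IsIdem i := by
    have h := conj_idem t⁻¹ he
    rwa [inv_inv, mul_assoc] at h
  have h_ie : i * e = e := by
    rw [idem_comm hi_idem he]; exact loop3
  have h_fef : f * e * f⁻¹ = e := by
    rw [hfinv, hf_def]
    calc e * t * e * (t⁻¹ * e) = (e * (t * (e * t⁻¹))) * e := by simp only [mul_assoc]
      _ = e * e := by rw [loop2]
      _ = e := he
  have class_iff : ∀ s : T, s ∈ (schutzGraph (letterMono g) e).supp ↔ GreenR s e :=
    supp_sg hg he
  have h_fs_class : ∀ s : T, GreenR s e → GreenR (f * s) e := by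
    intro s hs
    rw [greenR_iff he] at hs ⊢
    rw [mul_inv_rev]
    calc f * s * (s⁻¹ * f⁻¹) = f * (s * s⁻¹) * f⁻¹ := by simp only [mul_assoc]
      _ = f * e * f⁻¹ := by rw [hs]
      _ = e := h_fef
  have h_cancel : ∀ s : T, GreenR s e → f⁻¹ * (f * s) = s := by
    intro s hs
    have hes : e * s = s := greenR_absorb he hs
    calc f⁻¹ * (f * s) = (f⁻¹ * f) * s := (mul_assoc _ _ _).symm
      _ = i * s := by rw [h_if]
      _ = i * (e * s) := by rw [hes]
      _ = (i * e) * s := (mul_assoc _ _ _).symm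
      _ = e * s := by rw [h_ie]
      _ = s := hes
  let ψ₀ : T → T := fun s => if GreenR s e then f * s else s
  have hψ₀_class : ∀ s, GreenR s e → ψ₀ s = f * s := fun s hs => if_pos hs
  have hψ₀_not : ∀ s, ¬ GreenR s e → ψ₀ s = s := fun s hs => if_neg hs
  have hinj : Function.Injective ψ₀ := by
    intro s s' hss
    by_cases hs : GreenR s e <;> by_cases hs' : GreenR s' e
    · rw [hψ₀_class s hs, hψ₀_class s' hs'] at hss
      rw [← h_cancel s hs, ← h_cancel s' hs', hss]
    · rw [hψ₀_class s hs, hψ₀_not s' hs'] at hss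
      exact absurd (hss ▸ h_fs_class s hs) hs'
    · rw [hψ₀_not s hs, hψ₀_class s' hs'] at hss
      exact absurd (hss.symm ▸ h_fs_class s' hs') hs
    · rwa [hψ₀_not s hs, hψ₀_not s' hs'] at hss
  have hbij' : Function.Bijective ψ₀ := Finite.injective_iff_bijective.mp hinj
  refine ⟨Equiv.ofBijective ψ₀ hbij', ⟨⟨fun s hs => ?_, fun s _ s' _ h => hinj h,
    fun s hs => ?_⟩, fun v a w => ?_, fun v hv => ?_⟩, fun s hs => ?_⟩
  · -- MapsTo
    rw [class_iff] at hs ⊢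
    show GreenR (ψ₀ s) e
    rw [hψ₀_class s hs]
    exact h_fs_class s hs
  · -- SurjOn
    rw [class_iff] at hs
    obtain ⟨s', hs'⟩ := hbij'.2 s
    have hgs' : GreenR s' e := by
      by_contra h
      rw [hψ₀_not s' h] at hs'
      exact h (hs' ▸ hs)
    exact ⟨s', (class_iff s').mpr hgs', hs'⟩
  · -- edge iff
    show _ ↔ (schutzGraph (letterMono g) e).E (ψ₀ v) a (ψ₀ w)
    rw [sgE_iff g e v w a, sgE_iff g e (ψ₀ v) (ψ₀ w) a]
    constructor
    · rintro ⟨hv, hw, hmul⟩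
      rw [hψ₀_class v hv, hψ₀_class w hw]
      exact ⟨h_fs_class v hv, h_fs_class w hw, by rw [mul_assoc, hmul]⟩
    · rintro ⟨hv, hw, hmul⟩
      have hv' : GreenR v e := by
        by_contra h
        rw [hψ₀_not v h] at hv; exact h hv
      have hw' : GreenR w e := by
        by_contra h
        rw [hψ₀_not w h] at hw; exact h hw
      refine ⟨hv', hw', ?_⟩
      rw [hψ₀_class v hv', hψ₀_class w hw'] at hmul
      calc v * mval g a = (f⁻¹ * (f * v)) * mval g a := by rw [h_cancel v hv']
        _ = f⁻¹ * (f * v * mval g a) := by simp only [mul_assoc]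
        _ = f⁻¹ * (f * w) := by rw [hmul]
        _ = w := h_cancel w hw'
  · -- fixes outside supp
    rw [class_iff] at hv
    exact hψ₀_not v hv
  · -- π compatibility
    have hs' : GreenR s e := (class_iff s).mp hs
    obtain ⟨ws, hws⟩ := exists_word hg s
    have hval : wordValO (letterMono g) (le ++ (u ++ ws)) = some (f * s) := by
      rw [wordVal_append g le hleV (wordVal_append g u huV hws), hf_def, mul_assoc]
    have h1 : Δ.Path ν (le ++ (u ++ ws)) (π (f * s)) :=
      pathA he hπ3 hπ4 (h_fs_class s hs') hval
    have hA : Δ.Path ν ws (π s) := pathA he hπ3 hπ4 hs' hws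
    have hAφ : Δ.Path (φ ν) ws (φ (π s)) := autset_path hφ hA
    have h2 : Δ.Path ν (le ++ (u ++ ws)) (φ (π s)) :=
      path_append hleP (path_append huP hAφ)
    have hfin := path_det hdet h1 h2
    show π (ψ₀ s) = φ (π s)
    rw [hψ₀_class s hs']
    exact hfin

end IS18

theorem lifting_of_automorphisms_to_max_determinizing_schutzenberger
    {T X V : Type} [InverseSemigroup T] [Finite T]
    (g : X → T) (hg : GeneratesInv g)
    -- `(ν, Δ, ν)` is a closed inverse automaton relative to `⟨X | R⟩`:
    (Δ : LGraph V (X × Bool)) (ν : V) (hν : ν ∈ Δ.supp)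
    (hinv : ∀ v a w, Δ.E v a w → Δ.E w (a.1, !a.2) v)
    (hdet : IsDeterministic Δ) (hconn : GConn Δ) (hfin : Δ.supp.Finite)
    (hclosed : ClosedRel (letterMono g) Δ)
    -- `e` is the minimum idempotent labelling a loop based at `ν`:
    (e : T) (hmin : MinIdemLoopAt (letterMono g) Δ ν e)
    -- `Σ` is its Schützenberger graph, the maximum determinizing automaton of `Δ`,
    -- and `π` is the natural (DV-quotient) homomorphism with `π(α) = ν`:
    (Sg : LGraph T (X × Bool)) (hSg : Sg = schutzGraph (letterMono g) e)
    (π : T → V)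
    (hπ1 : Set.MapsTo π Sg.supp Δ.supp) (hπ2 : Set.SurjOn π Sg.supp Δ.supp)
    (hπ3 : ∀ v a w, Sg.E v a w → Δ.E (π v) a (π w)) (hπ4 : π e = ν)
    -- notation: the subgroup `H` and the set `S`
    (Hs : Set (Equiv.Perm T))
    (hHs : Hs = {ψ | ψ ∈ AutSet Sg ∧
      ∃ φ ∈ AutSet Δ, ∀ v ∈ Sg.supp, π (ψ v) = φ (π v)})
    (Ss : Set (Equiv.Perm T))
    (hSs : Ss = {ψ | ψ ∈ AutSet Sg ∧
      Set.MapsTo (⇑ψ) (π ⁻¹' {ν} ∩ Sg.supp) (π ⁻¹' {ν})}) :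
    -- every automorphism of `Δ` lifts:
    (∀ φ : Equiv.Perm V, φ ∈ AutSet Δ →
      ∃ ψ : Equiv.Perm T, ψ ∈ AutSet Sg ∧ ∀ v ∈ Sg.supp, π (ψ v) = φ (π v)) ∧
    -- the projection is a group epimorphism `H ↠ Aut(Δ)` with kernel `N = H ∩ S`:
    (∃ lam : Equiv.Perm T → Equiv.Perm V,
      Set.MapsTo lam Hs (AutSet Δ) ∧ Set.SurjOn lam Hs (AutSet Δ) ∧
      (∀ a ∈ Hs, ∀ b ∈ Hs, a * b ∈ Hs ∧ lam (a * b) = lam a * lam b) ∧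
      (∀ ψ ∈ Hs, (lam ψ = 1 ↔ ψ ∈ Hs ∩ Ss))) := by

  classical
  subst hSg hHs hSs
  have he : IsIdem e := hmin.2.1
  have part1 : ∀ φ : Equiv.Perm V, φ ∈ AutSet Δ →
      ∃ ψ : Equiv.Perm T, ψ ∈ AutSet (schutzGraph (letterMono g) e) ∧
        ∀ v ∈ (schutzGraph (letterMono g) e).supp, π (ψ v) = φ (π v) :=
    fun φ hφ => IS18.lift g hg Δ ν hν hinv hdet hconn e hmin π hπ3 hπ4 φ hφ
  refine ⟨part1, ?_⟩
  have uniq : ∀ (ψ : Equiv.Perm T) (φ φ' : Equiv.Perm V), φ ∈ AutSet Δ → φ' ∈ AutSet Δ →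
      (∀ v ∈ (schutzGraph (letterMono g) e).supp, π (ψ v) = φ (π v)) →
      (∀ v ∈ (schutzGraph (letterMono g) e).supp, π (ψ v) = φ' (π v)) →
      φ = φ' := by
    intro ψ φ φ' hφ hφ' h1 h2
    ext v
    by_cases hv : v ∈ Δ.supp
    · obtain ⟨s, hs, rfl⟩ := hπ2 hv
      rw [← h1 s hs, ← h2 s hs]
    · rw [hφ.2.2 v hv, hφ'.2.2 v hv]
  set P : Equiv.Perm T → Prop := fun ψ => ∃ φ ∈ AutSet Δ,
    ∀ v ∈ (schutzGraph (letterMono g) e).supp, π (ψ v) = φ (π v) with hP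
  let lam : Equiv.Perm T → Equiv.Perm V := fun ψ => if h : P ψ then h.choose else 1
  have lam_spec : ∀ ψ, ∀ h : P ψ, lam ψ ∈ AutSet Δ ∧
      ∀ v ∈ (schutzGraph (letterMono g) e).supp, π (ψ v) = lam ψ (π v) := by
    intro ψ h
    show (if h : P ψ then h.choose else 1) ∈ AutSet Δ ∧
      ∀ v ∈ (schutzGraph (letterMono g) e).supp,
        π (ψ v) = (if h : P ψ then h.choose else 1) (π v)
    rw [dif_pos h]
    exact h.choose_spec
  have lam_eq : ∀ ψ φ, ∀ h : P ψ, φ ∈ AutSet Δ →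
      (∀ v ∈ (schutzGraph (letterMono g) e).supp, π (ψ v) = φ (π v)) → lam ψ = φ :=
    fun ψ φ h hφ hc => uniq ψ _ _ (lam_spec ψ h).1 hφ (lam_spec ψ h).2 hc
  refine ⟨lam, ?_, ?_, ?_, ?_⟩
  · -- MapsTo
    intro ψ hψ
    exact (lam_spec ψ hψ.2).1
  · -- SurjOn
    intro φ hφ
    obtain ⟨ψ, hψA, hψc⟩ := part1 φ hφ
    exact ⟨ψ, ⟨hψA, φ, hφ, hψc⟩, lam_eq ψ φ ⟨φ, hφ, hψc⟩ hφ hψc⟩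
  · -- multiplicative
    intro a ha b hb
    have hA := lam_spec a ha.2
    have hB := lam_spec b hb.2
    have hmul : a * b ∈ AutSet (schutzGraph (letterMono g) e) :=
      IS18.mul_mem_AutSet ha.1 hb.1
    have hφmul : lam a * lam b ∈ AutSet Δ := IS18.mul_mem_AutSet hA.1 hB.1
    have hc : ∀ v ∈ (schutzGraph (letterMono g) e).supp,
        π ((a * b) v) = (lam a * lam b) (π v) := by
      intro v hv
      have hbv : b v ∈ (schutzGraph (letterMono g) e).supp := hb.1.1.mapsTo hv
      show π (a (b v)) = (lam a) ((lam b) (π v))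
      rw [← hB.2 v hv, ← hA.2 (b v) hbv]
    exact ⟨⟨hmul, lam a * lam b, hφmul, hc⟩,
      lam_eq _ _ ⟨lam a * lam b, hφmul, hc⟩ hφmul hc⟩
  · -- kernel
    intro ψ hψ
    constructor
    · intro h1
      refine ⟨hψ, hψ.1, ?_⟩
      rintro v ⟨hv1, hv2⟩
      have h3 := (lam_spec ψ hψ.2).2 v hv2
      rw [h1] at h3
      have h4 : π (ψ v) = π v := h3
      show π (ψ v) ∈ ({ν} : Set V)
      have hv1' : π v = ν := hv1
      rw [h4, hv1']
      rfl
    · intro h2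
      have hS := h2.2.2
      have hφA := (lam_spec ψ hψ.2).1
      have hφc := (lam_spec ψ hψ.2).2
      have heSupp : e ∈ (schutzGraph (letterMono g) e).supp :=
        (IS18.supp_sg hg he e).mpr (IS18.greenR_refl e)
      have hν' : lam ψ ν = ν := by
        have h3 := hφc e heSupp
        have h4 : ψ e ∈ π ⁻¹' {ν} := hS ⟨show π e ∈ ({ν} : Set V) from by rw [hπ4]; rfl, heSupp⟩
        have h5 : π (ψ e) = ν := h4
        rw [hπ4] at h3
        rw [h5] at h3
        exact h3.symm
      have hone : ∀ v ∈ (schutzGraph (letterMono g) e).supp,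
          π (ψ v) = (1 : Equiv.Perm V) (π v) := by
        intro v hv
        show π (ψ v) = π v
        have hgr : GreenR v e := (IS18.supp_sg hg he v).mp hv
        obtain ⟨wv, hwv⟩ := IS18.exists_word hg v
        have hp1 : Δ.Path ν wv (π v) := IS18.pathA he hπ3 hπ4 hgr hwv
        have hp2 : Δ.Path (lam ψ ν) wv (lam ψ (π v)) := IS18.autset_path hφA hp1
        rw [hν'] at hp2
        have h6 := IS18.path_det hdet hp2 hp1
        rw [hφc v hv, h6]
      exact lam_eq ψ 1 hψ.2 (IS18.one_mem_AutSet Δ) hone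
end
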